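/- arXiv:2004.11770 — 6 statements merged into one kernel-verified Lean document; each statement's English description precedes it below -/
import Mathlib

section
/- For every β ∈ (0,2), the map F ↦ S_β(F,F) is concave on the set of probability measures on ℝ^d with finite β-th moment: for all such probability measures F, G and all α ∈ (0,1), S_β(αF + (1−α)G, αF + (1−α)G) ≥ α·S_β(F,F) + (1−α)·S_β(G,G), where αF + (1−α)G denotes the mixture measure. -/
open MeasureTheory Set

/-- The Euclidean distance `‖x - y‖₂` on `ℝ^d`. -/
noncomputable def dist2 {d : ℕ} (x y : Fin d → ℝ) : ℝ := Real.sqrt (∑ i, (x i - y i) ^ 2)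

/-- `S_β(F,G) = ∫∫ ‖x-y‖₂^β F(dx) G(dy)`. -/
noncomputable def Sb (d : ℕ) (β : ℝ) (F G : Measure (Fin d → ℝ)) : ℝ :=
  ∫ x, ∫ y, dist2 x y ^ β ∂G ∂F

/-- The Euclidean norm `‖x‖₂` on `ℝ^d`. -/
noncomputable def euclNorm {d : ℕ} (x : Fin d → ℝ) : ℝ := Real.sqrt (∑ i, (x i) ^ 2)

open Real
open scoped NNReal ENNReal

section basic
variable {d : ℕ}

lemma euclNorm_eq (x : Fin d → ℝ) :
    euclNorm x = ‖(WithLp.equiv 2 (Fin d → ℝ)).symm x‖ := by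
  rw [EuclideanSpace.norm_eq]
  simp [euclNorm, sq_abs]

lemma dist2_eq (x y : Fin d → ℝ) :
    dist2 x y = ‖(WithLp.equiv 2 (Fin d → ℝ)).symm x - (WithLp.equiv 2 (Fin d → ℝ)).symm y‖ := by
  rw [show (WithLp.equiv 2 (Fin d → ℝ)).symm x - (WithLp.equiv 2 (Fin d → ℝ)).symm y =
      (WithLp.equiv 2 (Fin d → ℝ)).symm (x - y) from rfl, EuclideanSpace.norm_eq]
  simp [dist2, sq_abs]

lemma dist2_nonneg (x y : Fin d → ℝ) : 0 ≤ dist2 x y := Real.sqrt_nonneg _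

lemma dist2_symm (x y : Fin d → ℝ) : dist2 x y = dist2 y x := by
  unfold dist2; congr 1; apply Finset.sum_congr rfl; intro i _; ring

lemma dist2_triangle (x y : Fin d → ℝ) : dist2 x y ≤ euclNorm x + euclNorm y := by
  rw [dist2_eq, euclNorm_eq, euclNorm_eq]; exact norm_sub_le _ _

lemma dist2_sq (x y : Fin d → ℝ) : dist2 x y ^ (2:ℕ) = ∑ i, (x i - y i) ^ 2 :=
  Real.sq_sqrt (Finset.sum_nonneg fun i _ => sq_nonneg _)

lemma euclNorm_nonneg (x : Fin d → ℝ) : 0 ≤ euclNorm x := Real.sqrt_nonneg _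

lemma continuous_dist2 : Continuous fun p : (Fin d → ℝ) × (Fin d → ℝ) => dist2 p.1 p.2 := by
  unfold dist2; fun_prop

lemma continuous_euclNorm : Continuous fun x : Fin d → ℝ => euclNorm x := by
  unfold euclNorm; fun_prop

lemma kernel_bound {β : ℝ} (hβ0 : 0 < β) (x y : Fin d → ℝ) :
    dist2 x y ^ β ≤ 2 ^ β * (euclNorm x ^ β + euclNorm y ^ β) := by
  set a := euclNorm x with ha
  set b := euclNorm y with hb
  have ha0 : 0 ≤ a := euclNorm_nonneg x
  have hb0 : 0 ≤ b := euclNorm_nonneg y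
  calc dist2 x y ^ β ≤ (a + b) ^ β :=
        Real.rpow_le_rpow (dist2_nonneg x y) (dist2_triangle x y) hβ0.le
    _ ≤ (2 * max a b) ^ β := by
        apply Real.rpow_le_rpow (by positivity) _ hβ0.le
        rcases le_total a b with h | h
        · simp [max_eq_right h]; linarith
        · simp [max_eq_left h]; linarith
    _ = 2 ^ β * max a b ^ β := Real.mul_rpow (by norm_num) (le_max_of_le_left ha0)
    _ ≤ 2 ^ β * (a ^ β + b ^ β) := by
        apply mul_le_mul_of_nonneg_left _ (by positivity)
        rcases le_total a b with h | h
        · rw [max_eq_right h]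
          nlinarith [Real.rpow_nonneg ha0 β]
        · rw [max_eq_left h]
          nlinarith [Real.rpow_nonneg hb0 β]

end basic

section gauss
variable {d : ℕ}

lemma gauss_conv_1d {s : ℝ} (hs : 0 < s) (a b : ℝ) :
    ∫ t : ℝ, Real.exp (-(2*s)*((a-t)^2 + (b-t)^2)) =
      Real.sqrt (π/(4*s)) * Real.exp (-s*(a-b)^2) := by
  have h1 : ∀ t : ℝ, -(2*s)*((a-t)^2 + (b-t)^2)
      = -(4*s)*(t - (a+b)/2)^2 + (-s*(a-b)^2) := by intro t; ring
  calc ∫ t : ℝ, Real.exp (-(2*s)*((a-t)^2 + (b-t)^2))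
      = ∫ t : ℝ, Real.exp (-s*(a-b)^2) * Real.exp (-(4*s)*(t - (a+b)/2)^2) := by
        congr 1; funext t; rw [h1 t, Real.exp_add]; ring
    _ = Real.exp (-s*(a-b)^2) * ∫ t : ℝ, Real.exp (-(4*s)*(t - (a+b)/2)^2) :=
        integral_const_mul _ _
    _ = Real.exp (-s*(a-b)^2) * ∫ t : ℝ, Real.exp (-(4*s)*t^2) := by
        rw [integral_sub_right_eq_self (fun t => Real.exp (-(4*s)*t^2)) ((a+b)/2)]
    _ = Real.sqrt (π/(4*s)) * Real.exp (-s*(a-b)^2) := by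
        rw [integral_gaussian]; ring

lemma integrable_gauss_conv_1d {s : ℝ} (hs : 0 < s) (a b : ℝ) :
    Integrable (fun t : ℝ => Real.exp (-(2*s)*((a-t)^2 + (b-t)^2))) := by
  have h1 : ∀ t : ℝ, -(2*s)*((a-t)^2 + (b-t)^2)
      = -(4*s)*(t - (a+b)/2)^2 + (-s*(a-b)^2) := by intro t; ring
  have : (fun t : ℝ => Real.exp (-(2*s)*((a-t)^2 + (b-t)^2)))
      = fun t : ℝ => Real.exp (-s*(a-b)^2) * Real.exp (-(4*s)*(t - (a+b)/2)^2) := by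
    funext t; rw [h1 t, Real.exp_add]; ring
  rw [this]
  exact ((integrable_exp_neg_mul_sq (by positivity : (0:ℝ) < 4*s)).comp_sub_right
    ((a+b)/2)).const_mul _

lemma gauss_conv_d {s : ℝ} (hs : 0 < s) (x y : Fin d → ℝ) :
    ∫ t : Fin d → ℝ, ∏ i, Real.exp (-(2*s)*((x i - t i)^2 + (y i - t i)^2)) =
      Real.sqrt (π/(4*s)) ^ d * Real.exp (-s * ∑ i, (x i - y i)^2) := by
  rw [volume_pi, MeasureTheory.integral_fintype_prod_eq_prod (𝕜 := ℝ)
    (f := fun i (u:ℝ) => Real.exp (-(2*s)*((x i - u)^2 + (y i - u)^2)))]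
  have : ∀ i, (∫ u : ℝ, Real.exp (-(2*s)*((x i - u)^2 + (y i - u)^2)))
      = Real.sqrt (π/(4*s)) * Real.exp (-s*(x i - y i)^2) := fun i => gauss_conv_1d hs _ _
  simp_rw [this, Finset.prod_mul_distrib, Finset.prod_const, ← Real.exp_sum]
  congr 1
  · simp [Finset.card_univ]
  · congr 1; rw [Finset.mul_sum]

lemma integrable_gauss_conv_d {s : ℝ} (hs : 0 < s) (x y : Fin d → ℝ) :
    Integrable (fun t : Fin d → ℝ =>
      ∏ i, Real.exp (-(2*s)*((x i - t i)^2 + (y i - t i)^2))) :=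
  Integrable.fintype_prod (𝕜 := ℝ) fun i => integrable_gauss_conv_1d hs (x i) (y i)

end gauss

section pd
open scoped ENNReal
variable {d : ℕ}

noncomputable def gker (s : ℝ) (x t : Fin d → ℝ) : ℝ :=
  Real.exp (-(2*s) * ∑ i, (x i - t i)^2)

noncomputable def kker (s : ℝ) (x y : Fin d → ℝ) : ℝ :=
  Real.exp (-s * ∑ i, (x i - y i)^2)

noncomputable def Kl (s : ℝ) (μ ν : Measure (Fin d → ℝ)) : ℝ≥0∞ :=
  ∫⁻ x, ∫⁻ y, ENNReal.ofReal (kker s x y) ∂ν ∂μ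

noncomputable def Pl (s : ℝ) (μ : Measure (Fin d → ℝ)) (t : Fin d → ℝ) : ℝ≥0∞ :=
  ∫⁻ x, ENNReal.ofReal (gker s x t) ∂μ

lemma gker_nonneg {s : ℝ} (x t : Fin d → ℝ) : 0 ≤ gker s x t := (Real.exp_pos _).le
lemma kker_nonneg {s : ℝ} (x y : Fin d → ℝ) : 0 ≤ kker s x y := (Real.exp_pos _).le
lemma kker_le_one {s : ℝ} (hs : 0 < s) (x y : Fin d → ℝ) : kker s x y ≤ 1 := by
  unfold kker
  rw [← Real.exp_zero]
  apply Real.exp_le_exp.mpr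
  have : (0:ℝ) ≤ ∑ i, (x i - y i)^2 := Finset.sum_nonneg fun i _ => sq_nonneg _
  nlinarith

lemma gker_mul {s : ℝ} (x y t : Fin d → ℝ) :
    gker s x t * gker s y t = ∏ i, Real.exp (-(2*s)*((x i - t i)^2 + (y i - t i)^2)) := by
  rw [← Real.exp_sum]
  unfold gker
  rw [← Real.exp_add]
  congr 1
  rw [Finset.mul_sum, Finset.mul_sum, ← Finset.sum_add_distrib]
  apply Finset.sum_congr rfl; intros; ring

lemma lintegral_gker_mul {s : ℝ} (hs : 0 < s) (x y : Fin d → ℝ) :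
    ∫⁻ t : Fin d → ℝ, ENNReal.ofReal (gker s x t * gker s y t) =
      ENNReal.ofReal (Real.sqrt (π/(4*s)) ^ d * kker s x y) := by
  simp_rw [gker_mul]
  rw [← MeasureTheory.ofReal_integral_eq_lintegral_ofReal (integrable_gauss_conv_d hs x y)
    (Filter.Eventually.of_forall fun t => Finset.prod_nonneg fun i _ => (Real.exp_pos _).le)]
  rw [gauss_conv_d hs x y]
  rfl

lemma ennreal_amgm (a b : ℝ≥0∞) : 2*(a*b) ≤ a^2 + b^2 := by
  rcases eq_or_ne a ⊤ with ha | ha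
  · rcases eq_or_ne b 0 with hb | hb
    · simp [hb]
    · simp [ha, ENNReal.top_pow]
  rcases eq_or_ne b ⊤ with hb | hb
  · rcases eq_or_ne a 0 with ha' | ha'
    · simp [ha']
    · simp [hb, ENNReal.top_pow]
  lift a to ℝ≥0 using ha
  lift b to ℝ≥0 using hb
  rw [← ENNReal.coe_mul, ← ENNReal.coe_pow, ← ENNReal.coe_pow, ← ENNReal.coe_add,
    show ((2:ℝ≥0∞) = ((2:ℝ≥0):ℝ≥0∞)) by norm_num, ← ENNReal.coe_mul, ENNReal.coe_le_coe,
    ← NNReal.coe_le_coe]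
  push_cast
  nlinarith [sq_nonneg ((a:ℝ) - b)]

variable {s : ℝ} (μ ν : Measure (Fin d → ℝ)) [SFinite μ] [SFinite ν]

lemma measurable_Pl : Measurable fun t => Pl s μ t := by
  unfold Pl
  have h : Measurable fun p : (Fin d → ℝ) × (Fin d → ℝ) => ENNReal.ofReal (gker s p.2 p.1) := by
    unfold gker; fun_prop
  exact Measurable.lintegral_prod_right' h

lemma measurable_ofReal_kker_pair {s : ℝ} :
    Measurable fun z : (Fin d → ℝ) × (Fin d → ℝ) => ENNReal.ofReal (kker s z.1 z.2) := by
  unfold kker; fun_prop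

lemma Kl_prod : Kl s μ ν =
    ∫⁻ z : (Fin d → ℝ) × (Fin d → ℝ), ENNReal.ofReal (kker s z.1 z.2) ∂(μ.prod ν) := by
  unfold Kl
  exact (MeasureTheory.lintegral_prod _ measurable_ofReal_kker_pair.aemeasurable).symm

lemma Kl_eq_lintegral_Pl (hs : 0 < s) :
    ENNReal.ofReal (Real.sqrt (π/(4*s)) ^ d) * Kl s μ ν = ∫⁻ t, Pl s μ t * Pl s ν t := by
  have m1 : ∀ t : Fin d → ℝ, Measurable fun z : (Fin d → ℝ) × (Fin d → ℝ) =>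
      ENNReal.ofReal (gker s z.1 t) * ENNReal.ofReal (gker s z.2 t) := by
    intro t; unfold gker; fun_prop
  have m2 : ∀ t : Fin d → ℝ, Measurable fun x : Fin d → ℝ => ENNReal.ofReal (gker s x t) := by
    intro t; unfold gker; fun_prop
  have step1 : ∀ t, Pl s μ t * Pl s ν t =
      ∫⁻ z : (Fin d → ℝ) × (Fin d → ℝ),
        ENNReal.ofReal (gker s z.1 t) * ENNReal.ofReal (gker s z.2 t) ∂(μ.prod ν) := by
    intro t
    rw [MeasureTheory.lintegral_prod _ ((m1 t).aemeasurable)]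
    unfold Pl
    rw [← MeasureTheory.lintegral_mul_const'' _ ((m2 t).aemeasurable)]
    congr 1; funext x
    rw [← MeasureTheory.lintegral_const_mul' _ _ ENNReal.ofReal_ne_top]
  calc ENNReal.ofReal (Real.sqrt (π/(4*s)) ^ d) * Kl s μ ν
      = ∫⁻ z : (Fin d → ℝ) × (Fin d → ℝ),
          ENNReal.ofReal (Real.sqrt (π/(4*s)) ^ d * kker s z.1 z.2) ∂(μ.prod ν) := by
        rw [Kl_prod, ← MeasureTheory.lintegral_const_mul' _ _ ENNReal.ofReal_ne_top]
        congr 1; funext z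
        rw [ENNReal.ofReal_mul (by positivity)]
    _ = ∫⁻ z : (Fin d → ℝ) × (Fin d → ℝ),
          ∫⁻ t, ENNReal.ofReal (gker s z.1 t * gker s z.2 t) ∂(volume) ∂(μ.prod ν) := by
        congr 1; funext z
        rw [lintegral_gker_mul hs]
    _ = ∫⁻ z : (Fin d → ℝ) × (Fin d → ℝ),
          ∫⁻ t, ENNReal.ofReal (gker s z.1 t) * ENNReal.ofReal (gker s z.2 t)
            ∂(volume) ∂(μ.prod ν) := by
        congr 1; funext z; congr 1; funext t
        rw [ENNReal.ofReal_mul (gker_nonneg _ _)]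
    _ = ∫⁻ t, ∫⁻ z : (Fin d → ℝ) × (Fin d → ℝ),
          ENNReal.ofReal (gker s z.1 t) * ENNReal.ofReal (gker s z.2 t)
            ∂(μ.prod ν) ∂(volume) := by
        apply MeasureTheory.lintegral_lintegral_swap
        apply Measurable.aemeasurable
        exact (by unfold gker; fun_prop :
          Measurable fun q : ((Fin d → ℝ) × (Fin d → ℝ)) × (Fin d → ℝ) =>
            ENNReal.ofReal (gker s q.1.1 q.2) * ENNReal.ofReal (gker s q.1.2 q.2))
    _ = ∫⁻ t, Pl s μ t * Pl s ν t := by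
        congr 1; funext t
        rw [step1 t]

lemma gauss_pd (hs : 0 < s) : 2 * Kl s μ ν ≤ Kl s μ μ + Kl s ν ν := by
  have hC0 : (0:ℝ) < Real.sqrt (π/(4*s)) ^ d := by
    apply pow_pos
    apply Real.sqrt_pos.mpr
    positivity
  set C := ENNReal.ofReal (Real.sqrt (π/(4*s)) ^ d) with hCdef
  have hCne : C ≠ 0 := by rw [hCdef]; exact (ENNReal.ofReal_pos.mpr hC0).ne'
  have hCnt : C ≠ ⊤ := ENNReal.ofReal_ne_top
  rw [← ENNReal.mul_le_mul_iff_right hCne hCnt]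
  calc C * (2 * Kl s μ ν) = 2 * (C * Kl s μ ν) := by ring
    _ = ∫⁻ t, 2 * (Pl s μ t * Pl s ν t) := by
        rw [hCdef, Kl_eq_lintegral_Pl μ ν hs,
          MeasureTheory.lintegral_const_mul' _ _ (by norm_num : (2:ℝ≥0∞) ≠ ⊤)]
    _ ≤ ∫⁻ t, (Pl s μ t ^ 2 + Pl s ν t ^ 2) := lintegral_mono fun t => ennreal_amgm _ _
    _ = (∫⁻ t, Pl s μ t ^ 2) + ∫⁻ t, Pl s ν t ^ 2 :=
        MeasureTheory.lintegral_add_left ((measurable_Pl μ).pow_const 2) _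
    _ = C * (Kl s μ μ + Kl s ν ν) := by
        rw [mul_add, hCdef, Kl_eq_lintegral_Pl μ μ hs, Kl_eq_lintegral_Pl ν ν hs]
        congr 1 <;> · congr 1; funext t; rw [sq]

end pd

section bern
open scoped ENNReal

noncomputable def bfun (β : ℝ) (u : ℝ) : ℝ := (1 - Real.exp (-u)) * u ^ (-1 - β/2)

noncomputable def bint (β : ℝ) : ℝ := ∫ u in Ioi (0:ℝ), bfun β u

variable {β : ℝ}

lemma measurable_bfun : Measurable (bfun β) := by
  unfold bfun
  exact (by fun_prop : Measurable fun u : ℝ => 1 - Real.exp (-u)).mul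
    (measurable_id.pow measurable_const)

lemma one_sub_exp_neg_nonneg {u : ℝ} (hu : 0 ≤ u) : 0 ≤ 1 - Real.exp (-u) := by
  have : Real.exp (-u) ≤ 1 := by
    rw [← Real.exp_zero]; exact Real.exp_le_exp.mpr (by linarith)
  linarith

lemma one_sub_exp_neg_le_one {u : ℝ} : 1 - Real.exp (-u) ≤ 1 := by
  have := Real.exp_pos (-u); linarith

lemma one_sub_exp_neg_le_self {u : ℝ} : 1 - Real.exp (-u) ≤ u := by
  have := Real.add_one_le_exp (-u); linarith

lemma bfun_nonneg {u : ℝ} (hu : 0 < u) : 0 ≤ bfun β u :=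
  mul_nonneg (one_sub_exp_neg_nonneg hu.le) (Real.rpow_nonneg hu.le _)

lemma bfun_pos {u : ℝ} (hu : 0 < u) : 0 < bfun β u := by
  apply mul_pos _ (Real.rpow_pos_of_pos hu _)
  have : Real.exp (-u) < 1 := by
    rw [← Real.exp_zero]; exact Real.exp_lt_exp.mpr (by linarith)
  linarith

lemma integrableOn_bfun (hβ0 : 0 < β) (hβ2 : β < 2) :
    IntegrableOn (bfun β) (Ioi (0:ℝ)) := by
  have h1 : IntegrableOn (bfun β) (Ioc (0:ℝ) 1) := by
    have hbd : IntegrableOn (fun u : ℝ => u ^ (-β/2)) (Ioc (0:ℝ) 1) := by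
      rw [integrableOn_Ioc_iff_integrableOn_Ioo]
      rw [intervalIntegral.integrableOn_Ioo_rpow_iff zero_lt_one]
      linarith
    apply Integrable.mono' hbd (measurable_bfun.aestronglyMeasurable)
    filter_upwards [ae_restrict_mem measurableSet_Ioc] with u hu
    rw [Real.norm_eq_abs, abs_of_nonneg (bfun_nonneg hu.1)]
    unfold bfun
    calc (1 - Real.exp (-u)) * u ^ (-1 - β/2) ≤ u * u ^ (-1 - β/2) :=
          mul_le_mul_of_nonneg_right one_sub_exp_neg_le_self (Real.rpow_nonneg hu.1.le _)
      _ = u ^ (-β/2) := by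
          nth_rewrite 1 [← Real.rpow_one u]
          rw [← Real.rpow_add hu.1]
          ring_nf
  have h2 : IntegrableOn (bfun β) (Ioi (1:ℝ)) := by
    have hbd : IntegrableOn (fun u : ℝ => u ^ (-1 - β/2)) (Ioi (1:ℝ)) :=
      integrableOn_Ioi_rpow_of_lt (by linarith) zero_lt_one
    apply Integrable.mono' hbd (measurable_bfun.aestronglyMeasurable)
    filter_upwards [ae_restrict_mem measurableSet_Ioi] with u hu
    rw [Real.norm_eq_abs, abs_of_nonneg (bfun_nonneg (lt_trans zero_lt_one hu))]
    unfold bfun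
    have h01 : (0:ℝ) ≤ u := by linarith [mem_Ioi.mp hu]
    have := mul_le_mul_of_nonneg_right (one_sub_exp_neg_le_one (u := u))
      (Real.rpow_nonneg h01 (-1 - β/2))
    simpa using this
  have := h1.union h2
  rwa [Ioc_union_Ioi_eq_Ioi zero_le_one] at this

lemma bint_pos (hβ0 : 0 < β) (hβ2 : β < 2) : 0 < bint β := by
  rw [bint, setIntegral_pos_iff_support_of_nonneg_ae]
  · have hsub : Ioi (0:ℝ) ⊆ Function.support (bfun β) :=
      fun u hu => (bfun_pos (mem_Ioi.mp hu)).ne'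
    rw [inter_eq_self_of_subset_right hsub]
    simp [Real.volume_Ioi]
  · filter_upwards [ae_restrict_mem measurableSet_Ioi] with u hu
    exact bfun_nonneg hu
  · exact integrableOn_bfun hβ0 hβ2

lemma bern_scaling (hβ0 : 0 < β) (hβ2 : β < 2) {r : ℝ} (hr : 0 < r) :
    ∫ s in Ioi (0:ℝ), (1 - Real.exp (-(r^2 * s))) * s ^ (-1 - β/2) = r ^ β * bint β := by
  set c := r^2 with hc
  have hc0 : 0 < c := by positivity
  have hcongr : ∀ s ∈ Ioi (0:ℝ),
      (1 - Real.exp (-(c * s))) * s ^ (-1 - β/2) = c ^ (1 + β/2) * bfun β (c * s) := by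
    intro s hs
    have hs0 : (0:ℝ) < s := hs
    unfold bfun
    rw [Real.mul_rpow hc0.le hs0.le]
    rw [show c ^ (-1 - β/2) = (c ^ (1 + β/2))⁻¹ by
      rw [← Real.rpow_neg hc0.le]; ring_nf]
    field_simp
  rw [setIntegral_congr_fun measurableSet_Ioi hcongr]
  rw [MeasureTheory.integral_const_mul]
  rw [integral_comp_mul_left_Ioi (bfun β) 0 hc0, mul_zero]
  rw [smul_eq_mul, ← mul_assoc, ← bint]
  congr 1
  rw [← Real.rpow_neg_one c, ← Real.rpow_add hc0]
  rw [hc, ← Real.rpow_natCast r 2, ← Real.rpow_mul hr.le]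
  norm_num
  congr 1
  ring

lemma bern_integrable (hβ0 : 0 < β) (hβ2 : β < 2) {r : ℝ} (hr : 0 < r) :
    IntegrableOn (fun s => (1 - Real.exp (-(r^2 * s))) * s ^ (-1 - β/2)) (Ioi (0:ℝ)) := by
  set c := r^2 with hc
  have hc0 : 0 < c := by positivity
  have h1 : IntegrableOn (fun s => bfun β (c * s)) (Ioi (0:ℝ)) := by
    have := (integrableOn_Ioi_comp_mul_left_iff (bfun β) 0 hc0).mpr
    rw [mul_zero] at this
    exact this (integrableOn_bfun hβ0 hβ2)
  apply Integrable.congr ((h1.const_mul (c ^ (1 + β/2))))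
  filter_upwards [ae_restrict_mem measurableSet_Ioi] with s hs
  have hs0 : (0:ℝ) < s := hs
  unfold bfun
  rw [Real.mul_rpow hc0.le hs0.le]
  rw [show c ^ (-1 - β/2) = (c ^ (1 + β/2))⁻¹ by
    rw [← Real.rpow_neg hc0.le]; ring_nf]
  field_simp

lemma bern_lintegral (hβ0 : 0 < β) (hβ2 : β < 2) {r : ℝ} (hr : 0 ≤ r) :
    ∫⁻ s in Ioi (0:ℝ), ENNReal.ofReal ((1 - Real.exp (-(r^2 * s))) * s ^ (-1 - β/2)) =
      ENNReal.ofReal (r ^ β) * ENNReal.ofReal (bint β) := by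
  rcases eq_or_lt_of_le hr with h0 | hrpos
  · simp only [← h0]
    rw [Real.zero_rpow hβ0.ne']
    simp only [ENNReal.ofReal_zero, zero_mul]
    have : ∀ s : ℝ, (1 - Real.exp (-((0:ℝ)^2 * s))) * s ^ (-1 - β/2) = 0 := by
      intro s; norm_num
    simp only [this, ENNReal.ofReal_zero, MeasureTheory.lintegral_zero]
  · rw [← ENNReal.ofReal_mul (Real.rpow_nonneg hrpos.le _), ← bern_scaling hβ0 hβ2 hrpos]
    rw [← MeasureTheory.ofReal_integral_eq_lintegral_ofReal (bern_integrable hβ0 hβ2 hrpos)]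
    filter_upwards [ae_restrict_mem measurableSet_Ioi] with s hs
    exact mul_nonneg (one_sub_exp_neg_nonneg (mul_nonneg (sq_nonneg r) (le_of_lt hs)))
      (Real.rpow_nonneg (le_of_lt hs) _)

end bern

section assemble
open scoped ENNReal
variable {d : ℕ} {β : ℝ}

noncomputable def Lf (d : ℕ) (β : ℝ) (μ ν : Measure (Fin d → ℝ)) : ℝ≥0∞ :=
  ∫⁻ x, ∫⁻ y, ENNReal.ofReal (dist2 x y ^ β) ∂ν ∂μ

lemma measurable_dk (d : ℕ) (β : ℝ) :
    Measurable fun z : (Fin d → ℝ) × (Fin d → ℝ) => ENNReal.ofReal (dist2 z.1 z.2 ^ β) :=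
  ((continuous_dist2.measurable).pow measurable_const).ennreal_ofReal

lemma measurable_inner_dk (β : ℝ) (ν : Measure (Fin d → ℝ)) [SFinite ν] :
    Measurable fun x => ∫⁻ y, ENNReal.ofReal (dist2 x y ^ β) ∂ν :=
  Measurable.lintegral_prod_right' (measurable_dk d β)

lemma Lf_prod (μ ν : Measure (Fin d → ℝ)) [SFinite μ] [SFinite ν] :
    Lf d β μ ν = ∫⁻ z : (Fin d → ℝ) × (Fin d → ℝ),
      ENNReal.ofReal (dist2 z.1 z.2 ^ β) ∂(μ.prod ν) := by
  unfold Lf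
  exact (MeasureTheory.lintegral_prod _ (measurable_dk d β).aemeasurable).symm

lemma Lf_symm (μ ν : Measure (Fin d → ℝ)) [SFinite μ] [SFinite ν] :
    Lf d β μ ν = Lf d β ν μ := by
  unfold Lf
  rw [MeasureTheory.lintegral_lintegral_swap]
  · congr 1; funext y; congr 1; funext x; rw [dist2_symm]
  · exact (measurable_dk d β).aemeasurable

noncomputable def Mn (β : ℝ) (ν : Measure (Fin d → ℝ)) : ℝ≥0∞ :=
  ∫⁻ y, ENNReal.ofReal (euclNorm y ^ β) ∂ν

lemma Mn_ne_top {ν : Measure (Fin d → ℝ)}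
    (hν : Integrable (fun x => euclNorm x ^ β) ν) : Mn β ν ≠ ⊤ := by
  unfold Mn
  rw [← MeasureTheory.ofReal_integral_eq_lintegral_ofReal hν
    (Filter.Eventually.of_forall fun y => Real.rpow_nonneg (euclNorm_nonneg y) β)]
  exact ENNReal.ofReal_ne_top

lemma dk_le (hβ0 : 0 < β) (x y : Fin d → ℝ) :
    ENNReal.ofReal (dist2 x y ^ β) ≤
      ENNReal.ofReal ((2:ℝ) ^ β * euclNorm x ^ β) +
        ENNReal.ofReal ((2:ℝ) ^ β) * ENNReal.ofReal (euclNorm y ^ β) := by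
  rw [← ENNReal.ofReal_mul (Real.rpow_nonneg (by norm_num) β), ← ENNReal.ofReal_add
    (mul_nonneg (Real.rpow_nonneg (by norm_num) β) (Real.rpow_nonneg (euclNorm_nonneg x) β))
    (mul_nonneg (Real.rpow_nonneg (by norm_num) β) (Real.rpow_nonneg (euclNorm_nonneg y) β))]
  apply ENNReal.ofReal_le_ofReal
  calc dist2 x y ^ β ≤ 2 ^ β * (euclNorm x ^ β + euclNorm y ^ β) := kernel_bound hβ0 x y
    _ = 2 ^ β * euclNorm x ^ β + 2 ^ β * euclNorm y ^ β := by ring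

lemma inner_dk_ne_top (hβ0 : 0 < β) {ν : Measure (Fin d → ℝ)} [IsProbabilityMeasure ν]
    (hν : Integrable (fun x => euclNorm x ^ β) ν) (x : Fin d → ℝ) :
    ∫⁻ y, ENNReal.ofReal (dist2 x y ^ β) ∂ν ≠ ⊤ := by
  apply ne_top_of_le_ne_top (b := ENNReal.ofReal ((2:ℝ) ^ β * euclNorm x ^ β) +
      ENNReal.ofReal ((2:ℝ) ^ β) * Mn β ν)
  · exact ENNReal.add_ne_top.mpr ⟨ENNReal.ofReal_ne_top,
      ENNReal.mul_ne_top ENNReal.ofReal_ne_top (Mn_ne_top hν)⟩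
  · calc ∫⁻ y, ENNReal.ofReal (dist2 x y ^ β) ∂ν
        ≤ ∫⁻ y, (ENNReal.ofReal ((2:ℝ) ^ β * euclNorm x ^ β) +
            ENNReal.ofReal ((2:ℝ) ^ β) * ENNReal.ofReal (euclNorm y ^ β)) ∂ν :=
          lintegral_mono fun y => dk_le hβ0 x y
      _ = ENNReal.ofReal ((2:ℝ) ^ β * euclNorm x ^ β) +
            ENNReal.ofReal ((2:ℝ) ^ β) * Mn β ν := by
          rw [MeasureTheory.lintegral_add_left measurable_const]
          rw [MeasureTheory.lintegral_const, measure_univ, mul_one]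
          congr 1
          rw [MeasureTheory.lintegral_const_mul' _ _ ENNReal.ofReal_ne_top]
          rfl

lemma Lf_ne_top (hβ0 : 0 < β) {μ ν : Measure (Fin d → ℝ)}
    [IsProbabilityMeasure μ] [IsProbabilityMeasure ν]
    (hμ : Integrable (fun x => euclNorm x ^ β) μ)
    (hν : Integrable (fun x => euclNorm x ^ β) ν) : Lf d β μ ν ≠ ⊤ := by
  apply ne_top_of_le_ne_top (b := ENNReal.ofReal ((2:ℝ) ^ β) * Mn β μ +
      ENNReal.ofReal ((2:ℝ) ^ β) * Mn β ν)
  · exact ENNReal.add_ne_top.mpr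
      ⟨ENNReal.mul_ne_top ENNReal.ofReal_ne_top (Mn_ne_top hμ),
       ENNReal.mul_ne_top ENNReal.ofReal_ne_top (Mn_ne_top hν)⟩
  · calc Lf d β μ ν
        ≤ ∫⁻ x, (ENNReal.ofReal ((2:ℝ) ^ β) * ENNReal.ofReal (euclNorm x ^ β) +
            ENNReal.ofReal ((2:ℝ) ^ β) * Mn β ν) ∂μ := by
          apply lintegral_mono
          intro x
          calc ∫⁻ y, ENNReal.ofReal (dist2 x y ^ β) ∂ν
              ≤ ∫⁻ y, (ENNReal.ofReal ((2:ℝ) ^ β * euclNorm x ^ β) +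
                  ENNReal.ofReal ((2:ℝ) ^ β) * ENNReal.ofReal (euclNorm y ^ β)) ∂ν :=
                lintegral_mono fun y => dk_le hβ0 x y
            _ = ENNReal.ofReal ((2:ℝ) ^ β) * ENNReal.ofReal (euclNorm x ^ β) +
                  ENNReal.ofReal ((2:ℝ) ^ β) * Mn β ν := by
                rw [MeasureTheory.lintegral_add_left measurable_const]
                rw [MeasureTheory.lintegral_const, measure_univ, mul_one]
                congr 1
                · rw [ENNReal.ofReal_mul (Real.rpow_nonneg (by norm_num) β)]
                rw [MeasureTheory.lintegral_const_mul' _ _ ENNReal.ofReal_ne_top]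
                rfl
      _ = ENNReal.ofReal ((2:ℝ) ^ β) * Mn β μ + ENNReal.ofReal ((2:ℝ) ^ β) * Mn β ν := by
          rw [MeasureTheory.lintegral_add_right _ measurable_const]
          rw [MeasureTheory.lintegral_const, measure_univ, mul_one]
          congr 1
          rw [MeasureTheory.lintegral_const_mul' _ _ ENNReal.ofReal_ne_top]
          rfl

lemma Sb_eq_toReal (hβ0 : 0 < β) {μ ν : Measure (Fin d → ℝ)}
    [IsProbabilityMeasure μ] [IsProbabilityMeasure ν]
    (hμ : Integrable (fun x => euclNorm x ^ β) μ)
    (hν : Integrable (fun x => euclNorm x ^ β) ν) :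
    Sb d β μ ν = (Lf d β μ ν).toReal := by
  have hker : ∀ x : Fin d → ℝ, Measurable fun y : Fin d → ℝ => dist2 x y ^ β := by
    intro x
    have hc : Continuous fun y : Fin d → ℝ => dist2 x y := by unfold dist2; fun_prop
    exact hc.measurable.pow measurable_const
  have hinner : ∀ x : Fin d → ℝ, (∫ y, dist2 x y ^ β ∂ν) =
      (∫⁻ y, ENNReal.ofReal (dist2 x y ^ β) ∂ν).toReal := by
    intro x
    rw [MeasureTheory.integral_eq_lintegral_of_nonneg_ae
      (Filter.Eventually.of_forall fun y => Real.rpow_nonneg (dist2_nonneg x y) β)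
      (hker x).aestronglyMeasurable]
  unfold Sb
  simp_rw [hinner]
  rw [MeasureTheory.integral_eq_lintegral_of_nonneg_ae
    (Filter.Eventually.of_forall fun x => ENNReal.toReal_nonneg)
    (ENNReal.measurable_toReal.comp (measurable_inner_dk β ν)).aestronglyMeasurable]
  unfold Lf
  congr 1
  apply lintegral_congr
  intro x
  rw [ENNReal.ofReal_toReal (inner_dk_ne_top hβ0 hν x)]

end assemble

section key
open scoped ENNReal
variable {d : ℕ} {β : ℝ}

lemma exp_dist2_eq (s : ℝ) (x y : Fin d → ℝ) :
    Real.exp (-(dist2 x y ^ 2 * s)) = kker s x y := by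
  unfold kker
  congr 1
  rw [dist2_sq]
  ring

noncomputable def Vl (d : ℕ) (β : ℝ) (s : ℝ) (μ ν : Measure (Fin d → ℝ)) : ℝ≥0∞ :=
  ∫⁻ z : (Fin d → ℝ) × (Fin d → ℝ),
    ENNReal.ofReal ((1 - kker s z.1 z.2) * s ^ (-1 - β/2)) ∂(μ.prod ν)

lemma measurable_Vl_integrand :
    Measurable fun q : ((Fin d → ℝ) × (Fin d → ℝ)) × ℝ =>
      ENNReal.ofReal ((1 - kker q.2 q.1.1 q.1.2) * q.2 ^ (-1 - β/2)) := by
  have h1 : Continuous fun q : ((Fin d → ℝ) × (Fin d → ℝ)) × ℝ =>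
      1 - kker q.2 q.1.1 q.1.2 := by unfold kker; fun_prop
  exact (h1.measurable.mul (measurable_snd.pow measurable_const)).ennreal_ofReal

lemma measurable_Vl (μ ν : Measure (Fin d → ℝ)) [SFinite μ] [SFinite ν] :
    Measurable fun s : ℝ => Vl d β s μ ν := by
  unfold Vl
  have h1 : Continuous fun q : ℝ × ((Fin d → ℝ) × (Fin d → ℝ)) =>
      1 - kker q.1 q.2.1 q.2.2 := by unfold kker; fun_prop
  exact Measurable.lintegral_prod_right'
    ((h1.measurable.mul (measurable_fst.pow measurable_const)).ennreal_ofReal)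

lemma bern_Lf (hβ0 : 0 < β) (hβ2 : β < 2) (μ ν : Measure (Fin d → ℝ))
    [SFinite μ] [SFinite ν] :
    ENNReal.ofReal (bint β) * Lf d β μ ν = ∫⁻ s in Ioi (0:ℝ), Vl d β s μ ν := by
  calc ENNReal.ofReal (bint β) * Lf d β μ ν
      = ∫⁻ z : (Fin d → ℝ) × (Fin d → ℝ),
          ENNReal.ofReal (dist2 z.1 z.2 ^ β) * ENNReal.ofReal (bint β) ∂(μ.prod ν) := by
        rw [Lf_prod, mul_comm, ← MeasureTheory.lintegral_mul_const' _ _ ENNReal.ofReal_ne_top]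
    _ = ∫⁻ z : (Fin d → ℝ) × (Fin d → ℝ), ∫⁻ s in Ioi (0:ℝ),
          ENNReal.ofReal ((1 - Real.exp (-(dist2 z.1 z.2 ^ 2 * s))) * s ^ (-1 - β/2))
          ∂(volume) ∂(μ.prod ν) := by
        congr 1; funext z
        rw [bern_lintegral hβ0 hβ2 (dist2_nonneg z.1 z.2)]
    _ = ∫⁻ s in Ioi (0:ℝ), ∫⁻ z : (Fin d → ℝ) × (Fin d → ℝ),
          ENNReal.ofReal ((1 - Real.exp (-(dist2 z.1 z.2 ^ 2 * s))) * s ^ (-1 - β/2))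
          ∂(μ.prod ν) ∂(volume) := by
        apply MeasureTheory.lintegral_lintegral_swap
        apply Measurable.aemeasurable
        have h1 : Continuous fun q : ((Fin d → ℝ) × (Fin d → ℝ)) × ℝ =>
            1 - Real.exp (-(dist2 q.1.1 q.1.2 ^ 2 * q.2)) := by unfold dist2; fun_prop
        exact (by exact (h1.measurable.mul (measurable_snd.pow measurable_const)).ennreal_ofReal :
          Measurable fun q : ((Fin d → ℝ) × (Fin d → ℝ)) × ℝ =>
            ENNReal.ofReal ((1 - Real.exp (-(dist2 q.1.1 q.1.2 ^ 2 * q.2))) * q.2 ^ (-1 - β/2)))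
    _ = ∫⁻ s in Ioi (0:ℝ), Vl d β s μ ν := by
        congr 1; funext s
        unfold Vl
        congr 1; funext z
        rw [exp_dist2_eq]

variable (μ ν : Measure (Fin d → ℝ)) [IsProbabilityMeasure μ] [IsProbabilityMeasure ν]

lemma Kl_le_one {s : ℝ} (hs : 0 < s) : Kl s μ ν ≤ 1 := by
  rw [Kl_prod]
  calc ∫⁻ z : (Fin d → ℝ) × (Fin d → ℝ), ENNReal.ofReal (kker s z.1 z.2) ∂(μ.prod ν)
      ≤ ∫⁻ _z : (Fin d → ℝ) × (Fin d → ℝ), 1 ∂(μ.prod ν) :=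
        lintegral_mono fun z => ENNReal.ofReal_le_one.mpr (kker_le_one hs _ _)
    _ = 1 := by rw [MeasureTheory.lintegral_one, measure_univ]

lemma Vl_eq {s : ℝ} (hs : 0 < s) :
    Vl d β s μ ν = ENNReal.ofReal (s ^ (-1 - β/2)) * (1 - Kl s μ ν) := by
  unfold Vl
  have hpt : ∀ z : (Fin d → ℝ) × (Fin d → ℝ),
      ENNReal.ofReal ((1 - kker s z.1 z.2) * s ^ (-1 - β/2)) =
        ENNReal.ofReal (s ^ (-1 - β/2)) * (1 - ENNReal.ofReal (kker s z.1 z.2)) := by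
    intro z
    rw [mul_comm (1 - kker s z.1 z.2) _, ENNReal.ofReal_mul (Real.rpow_nonneg hs.le _)]
    congr 1
    rw [ENNReal.ofReal_sub _ (kker_nonneg _ _), ENNReal.ofReal_one]
  simp_rw [hpt]
  rw [MeasureTheory.lintegral_const_mul' _ _ ENNReal.ofReal_ne_top]
  congr 1
  have hfin : ∫⁻ z : (Fin d → ℝ) × (Fin d → ℝ),
      ENNReal.ofReal (kker s z.1 z.2) ∂(μ.prod ν) ≠ ⊤ := by
    apply ne_top_of_le_ne_top (b := 1) ENNReal.one_ne_top
    calc ∫⁻ z : (Fin d → ℝ) × (Fin d → ℝ), ENNReal.ofReal (kker s z.1 z.2) ∂(μ.prod ν)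
        ≤ ∫⁻ _z : (Fin d → ℝ) × (Fin d → ℝ), 1 ∂(μ.prod ν) :=
          lintegral_mono fun z => ENNReal.ofReal_le_one.mpr (kker_le_one hs _ _)
      _ = 1 := by rw [MeasureTheory.lintegral_one, measure_univ]
  rw [MeasureTheory.lintegral_sub measurable_ofReal_kker_pair hfin
    (Filter.Eventually.of_forall fun z => ENNReal.ofReal_le_one.mpr (kker_le_one hs _ _))]
  rw [MeasureTheory.lintegral_one, measure_univ, Kl_prod]

lemma V_pd {s : ℝ} (hs : 0 < s) :
    Vl d β s μ μ + Vl d β s ν ν ≤ 2 * Vl d β s μ ν := by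
  rw [Vl_eq μ μ hs, Vl_eq ν ν hs, Vl_eq μ ν hs]
  set c := ENNReal.ofReal (s ^ (-1 - β/2))
  have key := gauss_pd μ ν hs
  have ha1 : Kl s μ μ ≤ 1 := Kl_le_one μ μ hs
  have hb1 : Kl s ν ν ≤ 1 := Kl_le_one ν ν hs
  have hc1 : Kl s μ ν ≤ 1 := Kl_le_one μ ν hs
  have hane : Kl s μ μ ≠ ⊤ := ne_top_of_le_ne_top ENNReal.one_ne_top ha1
  have hbne : Kl s ν ν ≠ ⊤ := ne_top_of_le_ne_top ENNReal.one_ne_top hb1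
  have hcne : Kl s μ ν ≠ ⊤ := ne_top_of_le_ne_top ENNReal.one_ne_top hc1
  have h1 : (1 - Kl s μ μ) + (1 - Kl s ν ν) ≤ 2 * (1 - Kl s μ ν) := by
    have hXne : (1 - Kl s μ μ) + (1 - Kl s ν ν) ≠ ⊤ := by
      apply ENNReal.add_ne_top.mpr
      constructor <;> exact ne_top_of_le_ne_top ENNReal.one_ne_top tsub_le_self
    have hYne : (2:ℝ≥0∞) * (1 - Kl s μ ν) ≠ ⊤ := by
      apply ENNReal.mul_ne_top (by norm_num)
      exact ne_top_of_le_ne_top ENNReal.one_ne_top tsub_le_self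
    rw [← ENNReal.toReal_le_toReal hXne hYne]
    have hkey' : (2 * Kl s μ ν).toReal ≤ (Kl s μ μ + Kl s ν ν).toReal :=
      ENNReal.toReal_mono (ENNReal.add_ne_top.mpr ⟨hane, hbne⟩) key
    rw [ENNReal.toReal_mul, ENNReal.toReal_add hane hbne] at hkey'
    rw [ENNReal.toReal_add (ne_top_of_le_ne_top ENNReal.one_ne_top tsub_le_self)
      (ne_top_of_le_ne_top ENNReal.one_ne_top tsub_le_self),
      ENNReal.toReal_mul,
      ENNReal.toReal_sub_of_le ha1 ENNReal.one_ne_top,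
      ENNReal.toReal_sub_of_le hb1 ENNReal.one_ne_top,
      ENNReal.toReal_sub_of_le hc1 ENNReal.one_ne_top]
    simp only [ENNReal.toReal_one]
    have h2r : ((2:ℝ≥0∞)).toReal = 2 := by norm_num
    rw [h2r] at hkey' ⊢
    linarith
  calc c * (1 - Kl s μ μ) + c * (1 - Kl s ν ν)
      = c * ((1 - Kl s μ μ) + (1 - Kl s ν ν)) := by rw [mul_add]
    _ ≤ c * (2 * (1 - Kl s μ ν)) := mul_le_mul_right h1 c
    _ = 2 * (c * (1 - Kl s μ ν)) := by ring

lemma Lf_key (hβ0 : 0 < β) (hβ2 : β < 2) :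
    Lf d β μ μ + Lf d β ν ν ≤ 2 * Lf d β μ ν := by
  have hbI0 : ENNReal.ofReal (bint β) ≠ 0 :=
    (ENNReal.ofReal_pos.mpr (bint_pos hβ0 hβ2)).ne'
  have hbIt : ENNReal.ofReal (bint β) ≠ ⊤ := ENNReal.ofReal_ne_top
  rw [← ENNReal.mul_le_mul_iff_right hbI0 hbIt]
  calc ENNReal.ofReal (bint β) * (Lf d β μ μ + Lf d β ν ν)
      = (∫⁻ s in Ioi (0:ℝ), Vl d β s μ μ) + ∫⁻ s in Ioi (0:ℝ), Vl d β s ν ν := by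
        rw [mul_add, bern_Lf hβ0 hβ2, bern_Lf hβ0 hβ2]
    _ = ∫⁻ s in Ioi (0:ℝ), (Vl d β s μ μ + Vl d β s ν ν) :=
        (MeasureTheory.lintegral_add_left (measurable_Vl μ μ) _).symm
    _ ≤ ∫⁻ s in Ioi (0:ℝ), 2 * Vl d β s μ ν := by
        apply MeasureTheory.lintegral_mono_ae
        filter_upwards [ae_restrict_mem measurableSet_Ioi] with s hs
        exact V_pd μ ν hs
    _ = 2 * ∫⁻ s in Ioi (0:ℝ), Vl d β s μ ν := by
        rw [MeasureTheory.lintegral_const_mul' _ _ (by norm_num : (2:ℝ≥0∞) ≠ ⊤)]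
    _ = ENNReal.ofReal (bint β) * (2 * Lf d β μ ν) := by
        rw [← bern_Lf hβ0 hβ2]; ring

end key

section final
open scoped ENNReal
variable {d : ℕ} {β : ℝ}

lemma Lf_mix (a b : ℝ≥0∞) (ha : a ≠ ⊤) (hb : b ≠ ⊤)
    (F G : Measure (Fin d → ℝ)) [SFinite F] [SFinite G] :
    Lf d β (a • F + b • G) (a • F + b • G) =
      a * (a * Lf d β F F + b * Lf d β F G) + b * (a * Lf d β G F + b * Lf d β G G) := by
  have inner : ∀ x : Fin d → ℝ,
      ∫⁻ y, ENNReal.ofReal (dist2 x y ^ β) ∂(a • F + b • G) =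
        a * (∫⁻ y, ENNReal.ofReal (dist2 x y ^ β) ∂F) +
          b * ∫⁻ y, ENNReal.ofReal (dist2 x y ^ β) ∂G := by
    intro x
    rw [MeasureTheory.lintegral_add_measure, MeasureTheory.lintegral_smul_measure,
      MeasureTheory.lintegral_smul_measure, smul_eq_mul, smul_eq_mul]
  unfold Lf
  simp_rw [inner]
  rw [MeasureTheory.lintegral_add_measure, MeasureTheory.lintegral_smul_measure,
    MeasureTheory.lintegral_smul_measure, smul_eq_mul, smul_eq_mul]
  rw [MeasureTheory.lintegral_add_left ((measurable_inner_dk β F).const_mul a),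
    MeasureTheory.lintegral_add_left ((measurable_inner_dk β F).const_mul a),
    MeasureTheory.lintegral_const_mul' _ _ ha, MeasureTheory.lintegral_const_mul' _ _ hb,
    MeasureTheory.lintegral_const_mul' _ _ ha, MeasureTheory.lintegral_const_mul' _ _ hb]

/-- for `β ∈ (0,2)`, the map `F ↦ S_β(F,F)` is concave on probability
measures on `ℝ^d` with finite `β`-th moment. -/
theorem stmt0 (d : ℕ) (β : ℝ) (hβ0 : 0 < β) (hβ2 : β < 2)
    (F G : Measure (Fin d → ℝ)) [IsProbabilityMeasure F] [IsProbabilityMeasure G]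
    (hF : Integrable (fun x => euclNorm x ^ β) F)
    (hG : Integrable (fun x => euclNorm x ^ β) G)
    (α : ℝ) (hα0 : 0 < α) (hα1 : α < 1) :
    α * Sb d β F F + (1 - α) * Sb d β G G ≤
      Sb d β (ENNReal.ofReal α • F + ENNReal.ofReal (1 - α) • G)
             (ENNReal.ofReal α • F + ENNReal.ofReal (1 - α) • G) := by
  set a := ENNReal.ofReal α with hadef
  set b := ENNReal.ofReal (1 - α) with hbdef
  have ha : a ≠ ⊤ := ENNReal.ofReal_ne_top
  have hb : b ≠ ⊤ := ENNReal.ofReal_ne_top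
  have hab : a + b = 1 := by
    rw [hadef, hbdef, ← ENNReal.ofReal_add hα0.le (by linarith)]
    norm_num
  haveI hm : IsProbabilityMeasure (a • F + b • G) := by
    constructor
    rw [Measure.add_apply, Measure.smul_apply, Measure.smul_apply, measure_univ, measure_univ,
      smul_eq_mul, smul_eq_mul, mul_one, mul_one, hab]
  have hmint : Integrable (fun x => euclNorm x ^ β) (a • F + b • G) := by
    apply Integrable.add_measure
    · exact hF.smul_measure ha
    · exact hG.smul_measure hb
  set A := Lf d β F F with hA
  set B := Lf d β G G with hB
  set C := Lf d β F G with hC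
  have hAne : A ≠ ⊤ := Lf_ne_top hβ0 hF hF
  have hBne : B ≠ ⊤ := Lf_ne_top hβ0 hG hG
  have hCne : C ≠ ⊤ := Lf_ne_top hβ0 hF hG
  have key : A + B ≤ 2 * C := Lf_key F G hβ0 hβ2
  have expand : Lf d β (a • F + b • G) (a • F + b • G) =
      (a * a * A + b * b * B) + (a * b) * (2 * C) := by
    rw [Lf_mix a b ha hb F G, Lf_symm G F, ← hA, ← hB, ← hC]
    ring
  have hmne : Lf d β (a • F + b • G) (a • F + b • G) ≠ ⊤ := by
    rw [expand]
    apply ENNReal.add_ne_top.mpr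
    constructor
    · apply ENNReal.add_ne_top.mpr
      exact ⟨ENNReal.mul_ne_top (ENNReal.mul_ne_top ha ha) hAne,
        ENNReal.mul_ne_top (ENNReal.mul_ne_top hb hb) hBne⟩
    · exact ENNReal.mul_ne_top (ENNReal.mul_ne_top ha hb)
        (ENNReal.mul_ne_top (by norm_num) hCne)
  have hineq : a * A + b * B ≤ Lf d β (a • F + b • G) (a • F + b • G) := by
    rw [expand]
    calc a * A + b * B = (a * (a + b)) * A + (b * (a + b)) * B := by rw [hab, mul_one, mul_one]
      _ = (a * a * A + b * b * B) + (a * b) * (A + B) := by ring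
      _ ≤ (a * a * A + b * b * B) + (a * b) * (2 * C) :=
          add_le_add le_rfl (mul_le_mul_right key _)
  rw [Sb_eq_toReal hβ0 hF hF, Sb_eq_toReal hβ0 hG hG, Sb_eq_toReal hβ0 hmint hmint]
  have hL : α * (Lf d β F F).toReal + (1 - α) * (Lf d β G G).toReal =
      (a * A + b * B).toReal := by
    rw [ENNReal.toReal_add (ENNReal.mul_ne_top ha hAne) (ENNReal.mul_ne_top hb hBne),
      ENNReal.toReal_mul, ENNReal.toReal_mul, hadef, hbdef,
      ENNReal.toReal_ofReal hα0.le, ENNReal.toReal_ofReal (by linarith : (0:ℝ) ≤ 1 - α)]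
  rw [hL]
  exact ENNReal.toReal_mono hmne hineq

end final
end

section
/- Let β ∈ (0,2) and let F₁ and G₁ be probability distributions on ℝ with finite β-th moments. Let F⁺ be the law of (X,…,X) ∈ ℝ^d with X ∼ F₁ and G⁺ the law of (Y,…,Y) ∈ ℝ^d with Y ∼ G₁. Then for every probability measure F on ℝ^d all of whose coordinate marginals equal F₁ and every probability measure G on ℝ^d all of whose coordinate marginals equal G₁, one has S_β(F,G) ≥ S_β(F⁺,G⁺) = d^{β/2} · E|X−Y|^β, where X ∼ F₁ and Y ∼ G₁ are independent. -/
open MeasureTheory Set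

/-- The comonotone lift of a univariate distribution: the law of `(X,…,X)` for `X ∼ μ`. -/
noncomputable def diagLaw (d : ℕ) (μ : Measure ℝ) : Measure (Fin d → ℝ) :=
  Measure.map (fun u : ℝ => fun _ : Fin d => u) μ

/-- `M_β(F₁,G₁) = E|X-Y|^β` for independent `X ∼ F₁`, `Y ∼ G₁`. -/
noncomputable def Mb (β : ℝ) (F1 G1 : Measure ℝ) : ℝ :=
  ∫ p : ℝ × ℝ, |p.1 - p.2| ^ β ∂(F1.prod G1)

/- ### Auxiliary lemmas -/

lemma my_rpow_add_le_add_rpow {p : ℝ} (hp : 0 ≤ p) (hp1 : p ≤ 1) {a b : ℝ}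
    (ha : 0 ≤ a) (hb : 0 ≤ b) : (a + b) ^ p ≤ a ^ p + b ^ p := by
  have h := NNReal.coe_le_coe.2 (NNReal.rpow_add_le_add_rpow a.toNNReal b.toNNReal hp hp1)
  push_cast at h
  rwa [Real.coe_toNNReal a ha, Real.coe_toNNReal b hb] at h

lemma my_sum_rpow_le {ι : Type*} (s : Finset ι) (f : ι → ℝ) (hf : ∀ i, 0 ≤ f i)
    {p : ℝ} (hp0 : 0 < p) (hp1 : p ≤ 1) :
    (∑ i ∈ s, f i) ^ p ≤ ∑ i ∈ s, f i ^ p := by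
  induction s using Finset.cons_induction with
  | empty => simp [Real.zero_rpow hp0.ne']
  | cons a s ha ih =>
      rw [Finset.sum_cons, Finset.sum_cons]
      calc (f a + ∑ i ∈ s, f i) ^ p
          ≤ f a ^ p + (∑ i ∈ s, f i) ^ p :=
            my_rpow_add_le_add_rpow hp0.le hp1 (hf a) (Finset.sum_nonneg fun i _ => hf i)
        _ ≤ f a ^ p + ∑ i ∈ s, f i ^ p := by linarith

lemma my_two_rpow_bound {β : ℝ} (hβ : 0 ≤ β) {a b : ℝ} (ha : 0 ≤ a) (hb : 0 ≤ b) :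
    (a + b) ^ β ≤ 2 ^ β * (a ^ β + b ^ β) := by
  have h1 : a + b ≤ 2 * max a b := by
    rcases le_total a b with h | h
    · rw [max_eq_right h]; linarith
    · rw [max_eq_left h]; linarith
  have h2 : (max a b) ^ β ≤ a ^ β + b ^ β := by
    rcases le_total a b with h | h
    · rw [max_eq_right h]
      have := Real.rpow_nonneg ha β
      linarith
    · rw [max_eq_left h]
      have := Real.rpow_nonneg hb β
      linarith
  calc (a + b) ^ β ≤ (2 * max a b) ^ β :=
        Real.rpow_le_rpow (by positivity) h1 hβ
    _ = 2 ^ β * (max a b) ^ β :=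
        Real.mul_rpow (by norm_num) (le_max_of_le_left ha)
    _ ≤ 2 ^ β * (a ^ β + b ^ β) :=
        mul_le_mul_of_nonneg_left h2 (Real.rpow_nonneg (by norm_num) β)

lemma dist2_rpow_eq {d : ℕ} (x y : Fin d → ℝ) (β : ℝ) :
    dist2 x y ^ β = (∑ i, (x i - y i) ^ 2) ^ (β / 2) := by
  rw [dist2, Real.sqrt_eq_rpow,
    ← Real.rpow_mul (Finset.sum_nonneg fun i _ => sq_nonneg _)]
  congr 1; ring

lemma abs_rpow_of_sq {a : ℝ} {β : ℝ} : (a ^ 2) ^ (β / 2) = |a| ^ β := by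
  rw [← sq_abs, ← Real.rpow_natCast |a| 2, ← Real.rpow_mul (abs_nonneg _)]
  congr 1; push_cast; ring

lemma my_up_bound {d : ℕ} {β : ℝ} (hβ0 : 0 < β) (hβ2 : β ≤ 2) (a : Fin d → ℝ) :
    (∑ i, (a i) ^ 2) ^ (β / 2) ≤ ∑ i, |a i| ^ β := by
  have h := my_sum_rpow_le Finset.univ (fun i => (a i) ^ 2) (fun i => sq_nonneg _)
    (p := β / 2) (by positivity) (by linarith)
  refine h.trans_eq (Finset.sum_congr rfl fun i _ => ?_)
  exact abs_rpow_of_sq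

lemma my_key_low {d : ℕ} {β : ℝ} (hβ0 : 0 < β) (hβ2 : β < 2) (hd : 0 < d) (a : Fin d → ℝ) :
    (d : ℝ) ^ (β / 2) * ∑ i, |a i| ^ β ≤ (d : ℝ) * (∑ i, (a i) ^ 2) ^ (β / 2) := by
  have hd' : (0 : ℝ) < d := by exact_mod_cast hd
  set T := ∑ i, |a i| ^ β with hTdef
  set S := ∑ i, (a i) ^ 2 with hSdef
  have hT0 : 0 ≤ T := Finset.sum_nonneg fun i _ => Real.rpow_nonneg (abs_nonneg _) _
  have hS0 : 0 ≤ S := Finset.sum_nonneg fun i _ => sq_nonneg _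
  have hp : (1 : ℝ) ≤ 2 / β := (one_le_div hβ0).2 (by linarith)
  have h := Real.rpow_sum_le_const_mul_sum_rpow_of_nonneg Finset.univ
    (f := fun i => |a i| ^ β) hp (fun i _ => Real.rpow_nonneg (abs_nonneg _) _)
  have hterm : ∀ i : Fin d, (|a i| ^ β) ^ (2 / β) = (a i) ^ 2 := by
    intro i
    rw [← Real.rpow_mul (abs_nonneg _), show β * (2 / β) = 2 by field_simp,
      show (2 : ℝ) = ((2 : ℕ) : ℝ) by norm_num, Real.rpow_natCast, sq_abs]
  rw [Finset.sum_congr rfl (fun i _ => hterm i)] at h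
  simp only [Finset.card_univ, Fintype.card_fin] at h
  -- h : T ^ (2/β) ≤ d ^ (2/β - 1) * S
  have h2 : T ≤ ((d : ℝ) ^ (2 / β - 1) * S) ^ (β / 2) := by
    have h3 := Real.rpow_le_rpow (Real.rpow_nonneg hT0 _) h
      (by positivity : (0 : ℝ) ≤ β / 2)
    rwa [← Real.rpow_mul hT0, show (2 / β) * (β / 2) = 1 by field_simp,
      Real.rpow_one] at h3
  rw [Real.mul_rpow (Real.rpow_nonneg hd'.le _) hS0,
    ← Real.rpow_mul hd'.le] at h2
  calc (d : ℝ) ^ (β / 2) * T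
      ≤ (d : ℝ) ^ (β / 2) * ((d : ℝ) ^ ((2 / β - 1) * (β / 2)) * S ^ (β / 2)) :=
        mul_le_mul_of_nonneg_left h2 (Real.rpow_nonneg hd'.le _)
    _ = (d : ℝ) * S ^ (β / 2) := by
        rw [← mul_assoc, ← Real.rpow_add hd',
          show β / 2 + (2 / β - 1) * (β / 2) = 1 by field_simp; ring, Real.rpow_one]

/-- in case of identical marginals, `S_β(F,G) ≥ S_β(F⁺,G⁺) = d^{β/2} M_β(F₁,G₁)`. -/
theorem stmt2 (d : ℕ) (β : ℝ) (hβ0 : 0 < β) (hβ2 : β < 2)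
    (F1 G1 : Measure ℝ) [IsProbabilityMeasure F1] [IsProbabilityMeasure G1]
    (hF1 : Integrable (fun x => |x| ^ β) F1) (hG1 : Integrable (fun x => |x| ^ β) G1)
    (F G : Measure (Fin d → ℝ)) [IsProbabilityMeasure F] [IsProbabilityMeasure G]
    (hFm : ∀ i : Fin d, Measure.map (fun x => x i) F = F1)
    (hGm : ∀ i : Fin d, Measure.map (fun x => x i) G = G1) :
    Sb d β F G ≥ Sb d β (diagLaw d F1) (diagLaw d G1) ∧
      Sb d β (diagLaw d F1) (diagLaw d G1) = (d : ℝ) ^ (β / 2) * Mb β F1 G1 := by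
  -- the diagonal embedding
  set ι : ℝ → (Fin d → ℝ) := fun u => fun _ : Fin d => u with hιdef
  have hι : Measurable ι := measurable_pi_lambda _ fun _ => measurable_id
  haveI : IsProbabilityMeasure (diagLaw d F1) := Measure.isProbabilityMeasure_map hι.aemeasurable
  haveI : IsProbabilityMeasure (diagLaw d G1) := Measure.isProbabilityMeasure_map hι.aemeasurable
  -- trivial case d = 0
  rcases Nat.eq_zero_or_pos d with hd | hd
  · subst hd
    have h0 : ∀ x y : Fin 0 → ℝ, dist2 x y ^ β = 0 := fun x y => by
      simp [dist2, Real.zero_rpow hβ0.ne']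
    constructor
    · simp [Sb, h0, ge_iff_le, le_refl]
    · simp [Sb, h0, Real.zero_rpow (div_ne_zero hβ0.ne' two_ne_zero)]
  have hd' : (0 : ℝ) < d := by exact_mod_cast hd
  -- continuity facts
  have habsc : Continuous fun p : ℝ × ℝ => |p.1 - p.2| ^ β :=
    ((continuous_fst.sub continuous_snd).abs).rpow_const fun _ => Or.inr hβ0.le
  have hdistc : Continuous fun z : (Fin d → ℝ) × (Fin d → ℝ) => dist2 z.1 z.2 ^ β := by
    apply Continuous.rpow_const _ fun _ => Or.inr hβ0.le
    unfold dist2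
    exact Real.continuous_sqrt.comp (continuous_finset_sum _ fun i _ =>
      (((continuous_apply i).comp continuous_fst).sub
        ((continuous_apply i).comp continuous_snd)).pow 2)
  -- integrability of the distance on F1 × G1
  have habs_sub : ∀ a b : ℝ, |a - b| ≤ |a| + |b| := fun a b => by
    rw [sub_eq_add_neg]
    exact (abs_add_le a (-b)).trans (by rw [abs_neg])
  have hF1' : Integrable (fun p : ℝ × ℝ => |p.1| ^ β) (F1.prod G1) := by
    simpa using hF1.mul_prod (integrable_const (1 : ℝ))
  have hG1' : Integrable (fun p : ℝ × ℝ => |p.2| ^ β) (F1.prod G1) := by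
    simpa using (integrable_const (1 : ℝ)).mul_prod hG1
  have hM : Integrable (fun p : ℝ × ℝ => |p.1 - p.2| ^ β) (F1.prod G1) := by
    refine Integrable.mono' ((hF1'.add hG1').const_mul (2 ^ β))
      habsc.aestronglyMeasurable (Filter.Eventually.of_forall fun p => ?_)
    rw [Real.norm_eq_abs, abs_of_nonneg (Real.rpow_nonneg (abs_nonneg _) _)]
    calc |p.1 - p.2| ^ β ≤ (|p.1| + |p.2|) ^ β :=
          Real.rpow_le_rpow (abs_nonneg _) (habs_sub p.1 p.2) hβ0.le
      _ ≤ 2 ^ β * (|p.1| ^ β + |p.2| ^ β) :=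
          my_two_rpow_bound hβ0.le (abs_nonneg _) (abs_nonneg _)
  -- the coordinate projections push F × G to F1 × G1
  have hproj : ∀ i : Fin d, Measurable
      (Prod.map (fun x : Fin d → ℝ => x i) (fun x : Fin d → ℝ => x i)) :=
    fun i => (measurable_pi_apply i).prodMap (measurable_pi_apply i)
  have hmapFG : ∀ i : Fin d,
      Measure.map (Prod.map (fun x : Fin d → ℝ => x i) (fun x : Fin d → ℝ => x i))
        (F.prod G) = F1.prod G1 := by
    intro i
    rw [← Measure.map_prod_map _ _ (measurable_pi_apply i) (measurable_pi_apply i),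
      hFm i, hGm i]
  have hI2 : ∀ i : Fin d,
      Integrable (fun z : (Fin d → ℝ) × (Fin d → ℝ) => |z.1 i - z.2 i| ^ β) (F.prod G) := by
    intro i
    have h := hM
    rw [← hmapFG i] at h
    have h2 := (integrable_map_measure
      (by rw [hmapFG i]; exact habsc.aestronglyMeasurable) (hproj i).aemeasurable).1 h
    simpa [Function.comp_def, Prod.map] using h2
  have hInt2 : ∀ i : Fin d,
      ∫ z : (Fin d → ℝ) × (Fin d → ℝ), |z.1 i - z.2 i| ^ β ∂(F.prod G) = Mb β F1 G1 := by
    intro i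
    rw [Mb, ← hmapFG i, integral_map (hproj i).aemeasurable
      (by rw [hmapFG i]; exact habsc.aestronglyMeasurable)]
    simp [Prod.map]
  -- integrability of the Euclidean distance on F × G
  have hI3 : Integrable (fun z : (Fin d → ℝ) × (Fin d → ℝ) => dist2 z.1 z.2 ^ β)
      (F.prod G) := by
    refine Integrable.mono' (integrable_finset_sum Finset.univ fun i _ => hI2 i)
      hdistc.aestronglyMeasurable (Filter.Eventually.of_forall fun z => ?_)
    have hnn : (0 : ℝ) ≤ dist2 z.1 z.2 ^ β := Real.rpow_nonneg (Real.sqrt_nonneg _) _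
    rw [Real.norm_eq_abs, abs_of_nonneg hnn, dist2_rpow_eq]
    exact my_up_bound hβ0 hβ2.le (fun i => z.1 i - z.2 i)
  have hSbFG : Sb d β F G = ∫ z : (Fin d → ℝ) × (Fin d → ℝ),
      dist2 z.1 z.2 ^ β ∂(F.prod G) := by
    rw [Sb]
    exact integral_integral (f := fun x y => dist2 x y ^ β) hI3
  -- the sum integral
  have hsum : ∫ z : (Fin d → ℝ) × (Fin d → ℝ),
      (∑ i, |z.1 i - z.2 i| ^ β) ∂(F.prod G) = (d : ℝ) * Mb β F1 G1 := by
    rw [integral_finset_sum _ fun i _ => hI2 i]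
    simp [hInt2, Finset.sum_const, Finset.card_univ, nsmul_eq_mul]
  -- main inequality, multiplied by d
  have hmono0 : ∫ z : (Fin d → ℝ) × (Fin d → ℝ),
        (d : ℝ) ^ (β / 2) * (∑ i, |z.1 i - z.2 i| ^ β) ∂(F.prod G)
      ≤ ∫ z : (Fin d → ℝ) × (Fin d → ℝ), (d : ℝ) * (dist2 z.1 z.2 ^ β) ∂(F.prod G) := by
    refine integral_mono
      ((integrable_finset_sum Finset.univ fun i _ => hI2 i).const_mul _)
      (hI3.const_mul _) fun z => ?_
    simp only
    rw [dist2_rpow_eq]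
    exact my_key_low hβ0 hβ2 hd (fun i => z.1 i - z.2 i)
  have hmono : (d : ℝ) ^ (β / 2) * ((d : ℝ) * Mb β F1 G1) ≤ (d : ℝ) * Sb d β F G := by
    rw [integral_const_mul, integral_const_mul, hsum] at hmono0
    rw [hSbFG]
    exact hmono0
  -- the diagonal value
  have hpt : ∀ p : ℝ × ℝ, dist2 (ι p.1) (ι p.2) ^ β = (d : ℝ) ^ (β / 2) * |p.1 - p.2| ^ β := by
    intro p
    have hds : dist2 (ι p.1) (ι p.2) = Real.sqrt d * |p.1 - p.2| := by
      rw [dist2]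
      simp only [hιdef, Finset.sum_const, Finset.card_univ, Fintype.card_fin,
        nsmul_eq_mul]
      rw [Real.sqrt_mul (Nat.cast_nonneg d), Real.sqrt_sq_eq_abs]
    rw [hds, Real.mul_rpow (Real.sqrt_nonneg _) (abs_nonneg _), Real.sqrt_eq_rpow,
      ← Real.rpow_mul (Nat.cast_nonneg d), show (1 / 2 : ℝ) * β = β / 2 by ring]
  have hIdiag : Integrable (fun p : ℝ × ℝ => dist2 (ι p.1) (ι p.2) ^ β) (F1.prod G1) := by
    simp only [hpt]
    exact hM.const_mul _
  have hι2 : Measurable (Prod.map ι ι) := hι.prodMap hι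
  have hdiagprod : (diagLaw d F1).prod (diagLaw d G1)
      = Measure.map (Prod.map ι ι) (F1.prod G1) := by
    rw [diagLaw, diagLaw]
    exact Measure.map_prod_map _ _ hι hι
  have hintdiag : Integrable (fun z : (Fin d → ℝ) × (Fin d → ℝ) => dist2 z.1 z.2 ^ β)
      ((diagLaw d F1).prod (diagLaw d G1)) := by
    rw [hdiagprod]
    exact (integrable_map_measure hdistc.aestronglyMeasurable hι2.aemeasurable).2
      (by simpa [Function.comp_def, Prod.map] using hIdiag)
  have hSdiag : Sb d β (diagLaw d F1) (diagLaw d G1) = (d : ℝ) ^ (β / 2) * Mb β F1 G1 := by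
    have h1 : Sb d β (diagLaw d F1) (diagLaw d G1) = ∫ z : (Fin d → ℝ) × (Fin d → ℝ),
        dist2 z.1 z.2 ^ β ∂((diagLaw d F1).prod (diagLaw d G1)) := by
      rw [Sb]
      exact integral_integral (f := fun x y => dist2 x y ^ β) hintdiag
    rw [h1, hdiagprod,
      integral_map hι2.aemeasurable hdistc.aestronglyMeasurable]
    simp only [Prod.map, hpt]
    rw [integral_const_mul, Mb]
  refine ⟨?_, hSdiag⟩
  rw [hSdiag, ge_iff_le]
  have h' : (d : ℝ) * ((d : ℝ) ^ (β / 2) * Mb β F1 G1) ≤ (d : ℝ) * Sb d β F G := by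
    calc (d : ℝ) * ((d : ℝ) ^ (β / 2) * Mb β F1 G1)
        = (d : ℝ) ^ (β / 2) * ((d : ℝ) * Mb β F1 G1) := by ring
      _ ≤ (d : ℝ) * Sb d β F G := hmono
  exact le_of_mul_le_mul_left h' hd'
end

section
/- For every β ∈ (0,2) and all copulas C₁, C₂ on [0,1]^d, S_β(C₁,C₂) ≤ (d/6)^{β/2}. -/
open MeasureTheory Set

/-- The uniform (Lebesgue) measure on `[0,1]`. -/
noncomputable def uniform01 : Measure ℝ := volume.restrict (Set.Icc 0 1)

/-- A copula: a probability measure on `[0,1]^d` whose one-dimensional coordinate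
marginals all equal the uniform measure on `[0,1]`. -/
def IsCopula (d : ℕ) (C : Measure (Fin d → ℝ)) : Prop :=
  IsProbabilityMeasure C ∧ ∀ i : Fin d, Measure.map (fun x => x i) C = uniform01

lemma copula_ae_mem {d : ℕ} {C : Measure (Fin d → ℝ)} (h : IsCopula d C) :
    ∀ᵐ x ∂C, ∀ i, x i ∈ Icc (0:ℝ) 1 := by
  rw [ae_all_iff]
  intro i
  have hmeas : Measurable (fun x : Fin d → ℝ => x i) := measurable_pi_apply i
  have h0 : C ((fun x : Fin d → ℝ => x i) ⁻¹' (Icc (0:ℝ) 1)ᶜ) = 0 := by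
    rw [← Measure.map_apply hmeas measurableSet_Icc.compl, h.2 i, uniform01,
      Measure.restrict_apply measurableSet_Icc.compl]
    simp
  rw [ae_iff]
  exact h0

lemma copula_integral_id {d : ℕ} {C : Measure (Fin d → ℝ)} (h : IsCopula d C) (i : Fin d) :
    ∫ x, x i ∂C = 1/2 := by
  have hmeas : Measurable (fun x : Fin d → ℝ => x i) := measurable_pi_apply i
  have key : ∫ x, x i ∂C = ∫ t, t ∂(Measure.map (fun x : Fin d → ℝ => x i) C) :=
    (integral_map (φ := fun x : Fin d → ℝ => x i) (f := fun t : ℝ => t)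
      hmeas.aemeasurable measurable_id.aestronglyMeasurable).symm
  rw [key, h.2 i, uniform01, integral_Icc_eq_integral_Ioc,
    ← intervalIntegral.integral_of_le (zero_le_one), integral_id]
  norm_num

lemma copula_integral_sq {d : ℕ} {C : Measure (Fin d → ℝ)} (h : IsCopula d C) (i : Fin d) :
    ∫ x, (x i) ^ 2 ∂C = 1/3 := by
  have hmeas : Measurable (fun x : Fin d → ℝ => x i) := measurable_pi_apply i
  have key : ∫ x, (x i) ^ 2 ∂C = ∫ t, t ^ 2 ∂(Measure.map (fun x : Fin d → ℝ => x i) C) :=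
    (integral_map (φ := fun x : Fin d → ℝ => x i) (f := fun t : ℝ => t ^ 2)
      hmeas.aemeasurable (continuous_pow 2).aestronglyMeasurable).symm
  rw [key, h.2 i, uniform01, integral_Icc_eq_integral_Ioc,
    ← intervalIntegral.integral_of_le (zero_le_one), integral_pow]
  norm_num

lemma integrable_of_bound {α : Type*} [MeasurableSpace α] {μ : Measure α}
    [IsFiniteMeasure μ] {f : α → ℝ} (hf : AEStronglyMeasurable f μ) (c : ℝ)
    (hb : ∀ᵐ x ∂μ, |f x| ≤ c) : Integrable f μ :=
  Integrable.mono' (integrable_const c) hf (by simpa [Real.norm_eq_abs] using hb)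

/-- for all copulas `C₁, C₂` on `[0,1]^d`, `S_β(C₁,C₂) ≤ (d/6)^{β/2}`. -/
theorem stmt5 (d : ℕ) (β : ℝ) (hβ0 : 0 < β) (hβ2 : β < 2)
    (C1 C2 : Measure (Fin d → ℝ)) (h1 : IsCopula d C1) (h2 : IsCopula d C2) :
    Sb d β C1 C2 ≤ ((d : ℝ) / 6) ^ (β / 2) := by
  haveI := h1.1
  haveI := h2.1
  haveI : IsProbabilityMeasure (C1.prod C2) := by infer_instance
  set p := β / 2 with hp
  have hp0 : 0 < p := by positivity
  have hp1 : p ≤ 1 := by rw [hp]; linarith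
  set F : (Fin d → ℝ) × (Fin d → ℝ) → ℝ := fun z => ∑ i, (z.1 i - z.2 i) ^ 2 with hF
  have hFcont : Continuous F := by
    apply continuous_finset_sum
    intro i _
    exact (((continuous_apply i).comp continuous_fst).sub
      ((continuous_apply i).comp continuous_snd)).pow 2
  have hF0 : ∀ z, 0 ≤ F z := fun z => Finset.sum_nonneg fun i _ => sq_nonneg _
  -- a.e. membership in the cube
  have hz : ∀ᵐ z ∂(C1.prod C2),
      (∀ i, z.1 i ∈ Icc (0:ℝ) 1) ∧ ∀ i, z.2 i ∈ Icc (0:ℝ) 1 := by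
    rw [Measure.ae_prod_iff_ae_ae]
    · filter_upwards [copula_ae_mem h1] with x hx
      filter_upwards [copula_ae_mem h2] with y hy
      exact ⟨hx, hy⟩
    · have hset : {z : (Fin d → ℝ) × (Fin d → ℝ) |
          (∀ i, z.1 i ∈ Icc (0:ℝ) 1) ∧ ∀ i, z.2 i ∈ Icc (0:ℝ) 1}
          = (⋂ i, (fun z : (Fin d → ℝ) × (Fin d → ℝ) => z.1 i) ⁻¹' Icc 0 1) ∩
            (⋂ i, (fun z : (Fin d → ℝ) × (Fin d → ℝ) => z.2 i) ⁻¹' Icc 0 1) := by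
        ext z; simp [mem_iInter]
      rw [hset]
      exact (MeasurableSet.iInter fun i =>
          ((measurable_pi_apply i).comp measurable_fst) measurableSet_Icc).inter
        (MeasurableSet.iInter fun i =>
          ((measurable_pi_apply i).comp measurable_snd) measurableSet_Icc)
  have hFle : ∀ᵐ z ∂(C1.prod C2), F z ≤ (d : ℝ) := by
    filter_upwards [hz] with z hzz
    calc F z ≤ ∑ _i : Fin d, (1:ℝ) := by
          apply Finset.sum_le_sum
          intro i _
          obtain ⟨ha, hb⟩ := hzz
          have a1 := ha i; have a2 := hb i
          simp only [mem_Icc] at a1 a2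
          nlinarith [a1.1, a1.2, a2.1, a2.2]
      _ = (d : ℝ) := by simp
  have hgi : Integrable (fun z => F z ^ p) (C1.prod C2) := by
    apply integrable_of_bound ((hFcont.measurable.pow measurable_const).aestronglyMeasurable) ((d:ℝ) ^ p)
    filter_upwards [hFle] with z hzz
    rw [abs_of_nonneg (Real.rpow_nonneg (hF0 z) p)]
    exact Real.rpow_le_rpow (hF0 z) hzz hp0.le
  have hfi : Integrable F (C1.prod C2) := by
    apply integrable_of_bound hFcont.aestronglyMeasurable (d:ℝ)
    filter_upwards [hFle] with z hzz
    rwa [abs_of_nonneg (hF0 z)]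
  have key : (fun z : (Fin d → ℝ) × (Fin d → ℝ) => dist2 z.1 z.2 ^ β) = fun z => F z ^ p := by
    funext z
    show Real.sqrt (F z) ^ β = F z ^ p
    rw [Real.sqrt_eq_rpow, ← Real.rpow_mul (hF0 z)]
    congr 1
    rw [hp]; ring
  have hint : Integrable (fun z : (Fin d → ℝ) × (Fin d → ℝ) => dist2 z.1 z.2 ^ β)
      (C1.prod C2) := by rw [key]; exact hgi
  have step1 : Sb d β C1 C2 = ∫ z, F z ^ p ∂(C1.prod C2) := by
    rw [← key]
    exact (integral_prod _ hint).symm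
  have hcont : ContinuousOn (fun x : ℝ => x ^ p) (Ici 0) := fun x _ =>
    (Real.continuousAt_rpow_const x p (Or.inr hp0.le)).continuousWithinAt
  have jensen : ∫ z, F z ^ p ∂(C1.prod C2) ≤ (∫ z, F z ∂(C1.prod C2)) ^ p :=
    (Real.concaveOn_rpow hp0.le hp1).le_map_integral hcont isClosed_Ici
      (Filter.Eventually.of_forall fun z => hF0 z) hfi hgi
  -- moments
  have e1 : ∀ i : Fin d, ∫ z, ((z.1 : Fin d → ℝ) i)^2 ∂(C1.prod C2) = 1/3 := by
    intro i
    have h := integral_prod_mul (μ := C1) (ν := C2) (fun x : Fin d → ℝ => (x i)^2)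
      (fun _ => (1:ℝ))
    simpa [copula_integral_sq h1 i] using h
  have e2 : ∀ i : Fin d, ∫ z, ((z.2 : Fin d → ℝ) i)^2 ∂(C1.prod C2) = 1/3 := by
    intro i
    have h := integral_prod_mul (μ := C1) (ν := C2) (fun _ => (1:ℝ))
      (fun y : Fin d → ℝ => (y i)^2)
    simpa [copula_integral_sq h2 i] using h
  have e3 : ∀ i : Fin d, ∫ z, ((z.1 : Fin d → ℝ) i) * (z.2 i) ∂(C1.prod C2) = 1/4 := by
    intro i
    have h := integral_prod_mul (μ := C1) (ν := C2) (fun x : Fin d → ℝ => x i)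
      (fun y : Fin d → ℝ => y i)
    rw [copula_integral_id h1 i, copula_integral_id h2 i] at h
    rw [h]; norm_num
  have ia : ∀ i : Fin d, Integrable
      (fun z : (Fin d → ℝ) × (Fin d → ℝ) => (z.1 i)^2) (C1.prod C2) := by
    intro i
    apply integrable_of_bound (((continuous_apply i).comp continuous_fst).pow
      2).aestronglyMeasurable 1
    filter_upwards [hz] with z hzz
    have a1 := hzz.1 i
    simp only [mem_Icc] at a1
    rw [abs_of_nonneg (sq_nonneg _)]
    nlinarith [a1.1, a1.2]
  have ib : ∀ i : Fin d, Integrable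
      (fun z : (Fin d → ℝ) × (Fin d → ℝ) => (z.2 i)^2) (C1.prod C2) := by
    intro i
    apply integrable_of_bound (((continuous_apply i).comp continuous_snd).pow
      2).aestronglyMeasurable 1
    filter_upwards [hz] with z hzz
    have a2 := hzz.2 i
    simp only [mem_Icc] at a2
    rw [abs_of_nonneg (sq_nonneg _)]
    nlinarith [a2.1, a2.2]
  have ih : ∀ i : Fin d, Integrable
      (fun z : (Fin d → ℝ) × (Fin d → ℝ) => z.1 i * z.2 i) (C1.prod C2) := by
    intro i
    apply integrable_of_bound (((continuous_apply i).comp continuous_fst).mul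
      ((continuous_apply i).comp continuous_snd)).aestronglyMeasurable 1
    filter_upwards [hz] with z hzz
    have a1 := hzz.1 i; have a2 := hzz.2 i
    simp only [mem_Icc] at a1 a2
    rw [abs_mul]
    exact mul_le_one₀ (by rw [abs_of_nonneg a1.1]; exact a1.2) (abs_nonneg _)
      (by rw [abs_of_nonneg a2.1]; exact a2.2)
  have term : ∀ i : Fin d,
      ∫ z, ((z.1 : Fin d → ℝ) i - z.2 i)^2 ∂(C1.prod C2) = 1/6 := by
    intro i
    have expand : (fun z : (Fin d → ℝ) × (Fin d → ℝ) => (z.1 i - z.2 i)^2)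
        = fun z => ((z.1 i)^2 + (z.2 i)^2) - 2 * (z.1 i * z.2 i) := by
      funext z; ring
    have hadd : Integrable
        (fun z : (Fin d → ℝ) × (Fin d → ℝ) => z.1 i ^ 2 + z.2 i ^ 2) (C1.prod C2) :=
      (ia i).add (ib i)
    have hmul : Integrable
        (fun z : (Fin d → ℝ) × (Fin d → ℝ) => 2 * (z.1 i * z.2 i)) (C1.prod C2) :=
      (ih i).const_mul 2
    rw [expand, integral_sub hadd hmul, integral_add (ia i) (ib i),
      integral_const_mul, e1 i, e2 i, e3 i]
    norm_num
  have itermInt : ∀ i : Fin d, Integrable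
      (fun z : (Fin d → ℝ) × (Fin d → ℝ) => (z.1 i - z.2 i)^2) (C1.prod C2) := by
    intro i
    have expand : (fun z : (Fin d → ℝ) × (Fin d → ℝ) => (z.1 i - z.2 i)^2)
        = fun z => ((z.1 i)^2 + (z.2 i)^2) - 2 * (z.1 i * z.2 i) := by
      funext z; ring
    rw [expand]
    exact ((ia i).add (ib i)).sub ((ih i).const_mul 2)
  have total : ∫ z, F z ∂(C1.prod C2) = (d : ℝ) / 6 := by
    rw [hF, integral_finset_sum Finset.univ (fun i _ => itermInt i)]
    simp only [term]
    rw [Finset.sum_const, Finset.card_univ, Fintype.card_fin, nsmul_eq_mul]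
    ring
  calc Sb d β C1 C2 = ∫ z, F z ^ p ∂(C1.prod C2) := step1
    _ ≤ (∫ z, F z ∂(C1.prod C2)) ^ p := jensen
    _ = ((d : ℝ) / 6) ^ p := by rw [total]
end

section
/- Let U and V be independent random variables uniformly distributed on [0,1]. Then E√( (U−V)² + (1−U−V)² ) = (√2 + log(1+√2)) / (3√2). Equivalently, if C⁻ is the law of (U,1−U) and C⁺ is the law of (V,V), then S(C⁻,C⁺) = (√2 + log(1+√2)) / (3√2). -/
open MeasureTheory Set

/-- `S(F,G) = ∫∫ ‖x-y‖₂ F(dx) G(dy)`. -/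
noncomputable def S (d : ℕ) (F G : Measure (Fin d → ℝ)) : ℝ :=
  ∫ x, ∫ y, dist2 x y ∂G ∂F

/-- The countermonotone copula `C⁻` on `[0,1]²`: the law of `(U, 1-U)`. -/
noncomputable def CMinus2 : Measure (Fin 2 → ℝ) :=
  Measure.map (fun u : ℝ => ![u, 1 - u]) uniform01

/-- The comonotone copula `C⁺` on `[0,1]²`: the law of `(U, U)`. -/
noncomputable def CPlus2 : Measure (Fin 2 → ℝ) :=
  Measure.map (fun u : ℝ => ![u, u]) uniform01

instance : IsFiniteMeasure uniform01 := by
  unfold uniform01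
  constructor
  simp [Real.volume_Icc]

instance : SFinite uniform01 := by unfold uniform01; infer_instance


noncomputable def hfun (u : ℝ) : ℝ :=
  Real.sqrt 2 / 2 * (Real.sqrt ((u - 1/2)^2 + 1/4)
    + 2 * (u - 1/2)^2 * Real.arsinh (1 / (2 * |u - 1/2|)))

lemma inner_eq (u : ℝ) :
    (∫ v in (0:ℝ)..1, Real.sqrt ((u - v)^2 + (1 - u - v)^2)) = hfun u := by
  have hrw : ∀ v : ℝ, Real.sqrt ((u - v)^2 + (1 - u - v)^2)
      = Real.sqrt (2*(u - 1/2)^2 + 2*(v - 1/2)^2) := by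
    intro v; congr 1; ring
  simp only [hrw]
  set t : ℝ := u - 1/2 with ht
  rcases eq_or_ne t 0 with h0 | hne
  · -- t = 0 case
    rw [h0]
    have habs : ∀ v : ℝ, Real.sqrt (2*(0:ℝ)^2 + 2*(v - 1/2)^2)
        = Real.sqrt 2 * |v - 1/2| := by
      intro v
      rw [show (2*(0:ℝ)^2 + 2*(v-1/2)^2) = 2 * (v-1/2)^2 by ring,
        Real.sqrt_mul (by norm_num), Real.sqrt_sq_eq_abs]
    simp only [habs]
    rw [intervalIntegral.integral_const_mul]
    have h1 : (∫ v in (0:ℝ)..(1/2), |v - 1/2|) = ∫ v in (0:ℝ)..(1/2), (1/2 - v) := by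
      apply intervalIntegral.integral_congr
      intro v hv
      rw [Set.uIcc_of_le (by norm_num)] at hv
      show |v - 1/2| = 1/2 - v
      rw [abs_of_nonpos (by linarith [hv.2])]; ring
    have h2 : (∫ v in (1/2:ℝ)..1, |v - 1/2|) = ∫ v in (1/2:ℝ)..1, (v - 1/2) := by
      apply intervalIntegral.integral_congr
      intro v hv
      rw [Set.uIcc_of_le (by norm_num)] at hv
      show |v - 1/2| = v - 1/2
      rw [abs_of_nonneg (by linarith [hv.1])]
    have hsplit : (∫ v in (0:ℝ)..1, |v - 1/2|)
        = (∫ v in (0:ℝ)..(1/2), |v - 1/2|) + ∫ v in (1/2:ℝ)..1, |v - 1/2| := by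
      rw [intervalIntegral.integral_add_adjacent_intervals]
      · exact (continuous_abs.comp (by continuity)).intervalIntegrable _ _
      · exact (continuous_abs.comp (by continuity)).intervalIntegrable _ _
    rw [hsplit, h1, h2]
    have e1 : (∫ v in (0:ℝ)..(1/2), (1/2 - v)) = 1/8 := by
      rw [intervalIntegral.integral_sub intervalIntegrable_const
        (intervalIntegral.intervalIntegrable_id)]
      simp
      norm_num
    have e2 : (∫ v in (1/2:ℝ)..1, (v - 1/2)) = 1/8 := by
      rw [intervalIntegral.integral_sub intervalIntegral.intervalIntegrable_id
        intervalIntegrable_const]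
      simp
      norm_num
    rw [e1, e2]
    unfold hfun
    rw [← ht, h0]
    have h4 : Real.sqrt ((0:ℝ)^2 + 1/4) = 1/2 := by
      rw [show ((0:ℝ)^2 + 1/4) = (1/2)^2 by norm_num, Real.sqrt_sq (by norm_num)]
    rw [h4]
    norm_num
    ring
  · -- t ≠ 0 case
    have htpos : 0 < t^2 := by positivity
    set B : ℝ → ℝ := fun v => Real.sqrt 2 / 2 *
      ((v - 1/2) * Real.sqrt (t^2 + (v - 1/2)^2)
        + t^2 * Real.arsinh ((v - 1/2) / |t|)) with hB
    have hderiv : ∀ v ∈ Set.uIcc (0:ℝ) 1,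
        HasDerivAt B (Real.sqrt (2*t^2 + 2*(v - 1/2)^2)) v := by
      intro v _
      have hw : HasDerivAt (fun v : ℝ => v - 1/2) 1 v := (hasDerivAt_id v).sub_const _
      have hq : HasDerivAt (fun v : ℝ => t^2 + (v - 1/2)^2) (2*(v - 1/2)) v := by
        have := (hw.pow 2).const_add (t^2)
        simpa using this
      have hqpos : 0 < t^2 + (v - 1/2)^2 := by positivity
      have hsq : HasDerivAt (fun v : ℝ => Real.sqrt (t^2 + (v - 1/2)^2))
          (1 / (2 * Real.sqrt (t^2 + (v-1/2)^2)) * (2*(v - 1/2))) v :=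
        (Real.hasDerivAt_sqrt hqpos.ne').comp v hq
      have hprod : HasDerivAt (fun v : ℝ => (v - 1/2) * Real.sqrt (t^2 + (v - 1/2)^2))
          (1 * Real.sqrt (t^2 + (v-1/2)^2)
            + (v - 1/2) * (1 / (2 * Real.sqrt (t^2 + (v-1/2)^2)) * (2*(v - 1/2)))) v :=
        hw.mul hsq
      have hlin : HasDerivAt (fun v : ℝ => (v - 1/2) / |t|) (1 / |t|) v := by
        simpa using hw.div_const |t|
      have hars : HasDerivAt (fun v : ℝ => Real.arsinh ((v - 1/2) / |t|))
          ((Real.sqrt (1 + ((v - 1/2)/|t|)^2))⁻¹ * (1 / |t|)) v :=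
        (Real.hasDerivAt_arsinh _).comp v hlin
      have htot := (hprod.add (hars.const_mul (t^2))).const_mul (Real.sqrt 2 / 2)
      refine htot.congr_deriv ?_
      symm
      -- algebra
      set s := Real.sqrt (t^2 + (v - 1/2)^2) with hs
      have hspos : 0 < s := Real.sqrt_pos.2 hqpos
      have hs2 : s^2 = t^2 + (v - 1/2)^2 := Real.sq_sqrt hqpos.le
      have habs : 0 < |t| := abs_pos.2 hne
      have h1 : Real.sqrt (1 + ((v - 1/2)/|t|)^2) = s / |t| := by
        have he : (1 + ((v - 1/2)/|t|)^2) = (s/|t|)^2 := by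
          rw [div_pow, div_pow, sq_abs, hs2]
          field_simp
        rw [he, Real.sqrt_sq (by positivity)]
      have hL : Real.sqrt (2*t^2 + 2*(v - 1/2)^2) = Real.sqrt 2 * s := by
        rw [show (2*t^2 + 2*(v - 1/2)^2) = 2*(t^2 + (v-1/2)^2) by ring,
          Real.sqrt_mul (by norm_num)]
      rw [hL, h1]
      have hsq2 : Real.sqrt 2 > 0 := by positivity
      field_simp
      linear_combination 4 * hs2
    have hint : IntervalIntegrable (fun v => Real.sqrt (2*t^2 + 2*(v - 1/2)^2))
        volume 0 1 :=
      (Real.continuous_sqrt.comp (by continuity)).intervalIntegrable _ _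
    rw [intervalIntegral.integral_eq_sub_of_hasDerivAt hderiv hint]
    simp only [hB]
    unfold hfun
    rw [← ht]
    have e0 : ((0:ℝ) - 1/2) / |t| = -(1/(2*|t|)) := by
      field_simp
      ring
    have e1 : ((1:ℝ) - 1/2) / |t| = 1/(2*|t|) := by
      field_simp; ring
    rw [e0, e1, Real.arsinh_neg]
    rw [show ((1:ℝ) - 1/2)^2 = 1/4 by norm_num, show ((0:ℝ) - 1/2)^2 = 1/4 by norm_num]
    ring


lemma arsinh_le_self {x : ℝ} (hx : 0 ≤ x) : Real.arsinh x ≤ x := by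
  calc Real.arsinh x ≤ Real.arsinh (Real.sinh x) :=
        Real.arsinh_le_arsinh.2 (Real.self_le_sinh_iff.2 hx)
    _ = x := Real.arsinh_sinh x

lemma arsinh_term_le (t : ℝ) : t^2 * Real.arsinh (1 / (2 * |t|)) ≤ |t| / 2 := by
  rcases eq_or_ne t 0 with h | h
  · simp [h]
  · have habs : 0 < |t| := abs_pos.2 h
    have h1 : Real.arsinh (1 / (2 * |t|)) ≤ 1 / (2 * |t|) :=
      arsinh_le_self (by positivity)
    calc t^2 * Real.arsinh (1 / (2 * |t|)) ≤ t^2 * (1 / (2 * |t|)) := by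
          apply mul_le_mul_of_nonneg_left h1 (by positivity)
      _ = |t| / 2 := by
          have ht2 : t^2 = |t| * |t| := by rw [← sq_abs t]; ring
          rw [ht2]
          field_simp

lemma arsinh_term_nonneg (t : ℝ) : 0 ≤ t^2 * Real.arsinh (1 / (2 * |t|)) := by
  apply mul_nonneg (by positivity)
  rw [Real.arsinh_nonneg_iff]
  positivity

lemma hfun_nonneg (u : ℝ) : 0 ≤ hfun u := by
  unfold hfun
  have hA := Real.sqrt_nonneg ((u - 1/2)^2 + 1/4)
  have hB := arsinh_term_nonneg (u - 1/2)
  have h2 := Real.sqrt_nonneg 2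
  nlinarith

lemma hfun_le (u : ℝ) (hu : u ∈ Set.Icc (0:ℝ) 1) : hfun u ≤ 2 := by
  unfold hfun
  have h1 : Real.sqrt ((u - 1/2)^2 + 1/4) ≤ 1 := by
    obtain ⟨ha, hb⟩ := hu
    calc Real.sqrt ((u - 1/2)^2 + 1/4) ≤ Real.sqrt 1 := Real.sqrt_le_sqrt (by nlinarith)
      _ = 1 := Real.sqrt_one
  have h2 : 2 * (u - 1/2)^2 * Real.arsinh (1 / (2 * |u - 1/2|)) ≤ 1 := by
    have := arsinh_term_le (u - 1/2)
    have habs : |u - 1/2| ≤ 1 := by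
      rw [abs_le]; obtain ⟨h0, h1'⟩ := hu; constructor <;> linarith
    nlinarith [arsinh_term_nonneg (u - 1/2)]
  have hs2 : Real.sqrt 2 ≤ 2 := by
    nlinarith [Real.sq_sqrt (by norm_num : (0:ℝ) ≤ 2), Real.sqrt_nonneg 2]
  nlinarith [Real.sqrt_nonneg 2, hfun_nonneg u, h1, h2]

lemma hfun_measurable : Measurable hfun := by
  unfold hfun
  apply Measurable.const_mul
  apply Measurable.add
  · exact (Real.continuous_sqrt.measurable).comp (by measurability)
  · apply Measurable.mul (by measurability)
    exact Real.continuous_arsinh.measurable.comp (by measurability)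

lemma hfun_integrableOn : IntegrableOn hfun (Set.Icc (0:ℝ) 1) volume := by
  constructor
  · exact hfun_measurable.aestronglyMeasurable
  · apply MeasureTheory.HasFiniteIntegral.of_bounded (C := 2)
    filter_upwards [ae_restrict_mem measurableSet_Icc] with u hu
    rw [Real.norm_eq_abs, abs_of_nonneg (hfun_nonneg u)]
    exact hfun_le u hu

lemma hfun_intervalIntegrable1 : IntervalIntegrable hfun volume 0 (1/2) := by
  rw [intervalIntegrable_iff_integrableOn_Ioc_of_le (by norm_num)]
  exact hfun_integrableOn.mono_set (by
    intro x hx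
    exact ⟨hx.1.le, by linarith [hx.2]⟩)

lemma hfun_intervalIntegrable2 : IntervalIntegrable hfun volume (1/2) 1 := by
  rw [intervalIntegrable_iff_integrableOn_Ioc_of_le (by norm_num)]
  exact hfun_integrableOn.mono_set (by
    intro x hx
    exact ⟨by linarith [hx.1], hx.2⟩)

noncomputable def Hfun (x : ℝ) : ℝ :=
  Real.sqrt 2 / 2 * ((x - 1/2) * Real.sqrt (4*(x - 1/2)^2 + 1) / 3
    + Real.arsinh (2*(x - 1/2)) / 12
    + (2/3) * (x - 1/2)^3 * Real.arsinh (1/(2*(x - 1/2))))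

lemma Hfun_cont : ContinuousOn Hfun (Set.Icc (1/2 : ℝ) 1) := by
  have hc3 : ContinuousOn (fun x : ℝ => (2/3) * (x - 1/2)^3 * Real.arsinh (1/(2*(x - 1/2))))
      (Set.Icc (1/2 : ℝ) 1) := by
    intro x hx
    rcases eq_or_lt_of_le hx.1 with heq | hlt
    · -- x = 1/2
      rw [← heq]
      have hbound : ∀ᶠ y in nhdsWithin (1/2 : ℝ) (Set.Icc (1/2 : ℝ) 1),
          ‖(2/3 : ℝ) * (y - 1/2)^3 * Real.arsinh (1/(2*(y - 1/2)))‖ ≤ (y - 1/2)^2 := by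
        filter_upwards [self_mem_nhdsWithin] with y hy
        obtain ⟨hy1, hy2⟩ := hy
        rcases eq_or_lt_of_le hy1 with he | hl
        · rw [← he]; norm_num
        · have ht : 0 < y - 1/2 := by linarith
          have hnn : 0 ≤ Real.arsinh (1/(2*(y - 1/2))) := by
            rw [Real.arsinh_nonneg_iff]; positivity
          have hub : Real.arsinh (1/(2*(y - 1/2))) ≤ 1/(2*(y - 1/2)) :=
            arsinh_le_self (by positivity)
          rw [Real.norm_eq_abs, abs_of_nonneg (by positivity)]
          calc (2/3 : ℝ) * (y - 1/2)^3 * Real.arsinh (1/(2*(y - 1/2)))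
              ≤ (2/3 : ℝ) * (y - 1/2)^3 * (1/(2*(y - 1/2))) := by
                apply mul_le_mul_of_nonneg_left hub (by positivity)
            _ = (1/3 : ℝ) * (y - 1/2)^2 := by
                rw [mul_one_div, div_eq_iff (by positivity : (2:ℝ)*(y - 1/2) ≠ 0)]
                ring
            _ ≤ (y - 1/2)^2 := by nlinarith [sq_nonneg (y - 1/2)]
      have hg : Filter.Tendsto (fun x : ℝ => (x - 1/2)^2)
          (nhdsWithin (1/2 : ℝ) (Set.Icc (1/2 : ℝ) 1)) (nhds 0) := by
        have h' : Filter.Tendsto (fun x : ℝ => (x - 1/2)^2) (nhds (1/2 : ℝ)) (nhds 0) := by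
          have hc : Continuous (fun x : ℝ => (x - 1/2)^2) := by continuity
          have h2 := hc.tendsto (1/2 : ℝ)
          norm_num at h2
          exact h2
        exact h'.mono_left nhdsWithin_le_nhds
      have key := squeeze_zero_norm' hbound hg
      unfold ContinuousWithinAt
      convert key using 2
      norm_num
    · apply ContinuousAt.continuousWithinAt
      have ht : (x - 1/2 : ℝ) ≠ 0 := by linarith
      apply ContinuousAt.mul
      · fun_prop
      · apply Real.continuous_arsinh.continuousAt.comp
        apply ContinuousAt.div continuousAt_const (by fun_prop)
        intro h
        apply ht
        have : (2:ℝ) * (x - 1/2) = 0 := h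
        linarith [this]
  unfold Hfun
  apply ContinuousOn.mul continuousOn_const
  apply ContinuousOn.add
  apply ContinuousOn.add
  · apply ContinuousOn.div_const
    apply ContinuousOn.mul (by fun_prop)
    exact (Real.continuous_sqrt.comp (by continuity)).continuousOn
  · exact ((Real.continuous_arsinh.comp (by continuity)).continuousOn).div_const _
  · exact hc3

lemma Hfun_deriv : ∀ x ∈ Set.Ioo (1/2 : ℝ) 1, HasDerivAt Hfun (hfun x) x := by
  intro x hx
  have ht : 0 < x - 1/2 := by linarith [hx.1]
  set t : ℝ := x - 1/2 with htt
  have hw : HasDerivAt (fun x : ℝ => x - 1/2) 1 x := (hasDerivAt_id x).sub_const _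
  have hq : HasDerivAt (fun x : ℝ => 4*(x - 1/2)^2 + 1) (4*(2*(x-1/2)^1*1)) x :=
    ((hw.pow 2).const_mul 4).add_const 1
  have hqpos : (0:ℝ) < 4*(x - 1/2)^2 + 1 := by positivity
  have hsqrt : HasDerivAt (fun x : ℝ => Real.sqrt (4*(x - 1/2)^2 + 1))
      (1 / (2 * Real.sqrt (4*(x - 1/2)^2 + 1)) * (4*(2*(x-1/2)^1*1))) x :=
    (Real.hasDerivAt_sqrt hqpos.ne').comp x hq
  have h1 := (hw.mul hsqrt).div_const 3
  have hlin : HasDerivAt (fun x : ℝ => 2*(x - 1/2)) 2 x := by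
    simpa using hw.const_mul 2
  have h2 : HasDerivAt (fun x : ℝ => Real.arsinh (2*(x - 1/2)) / 12)
      ((Real.sqrt (1 + (2*(x-1/2))^2))⁻¹ * 2 / 12) x :=
    ((Real.hasDerivAt_arsinh _).comp x hlin).div_const 12
  have hden : HasDerivAt (fun x : ℝ => 2*(x - 1/2)) 2 x := hlin
  have hne : (2:ℝ)*(x - 1/2) ≠ 0 := by positivity
  have hinv : HasDerivAt (fun x : ℝ => 1/(2*(x - 1/2)))
      ((0*(2*(x-1/2)) - 1*2)/(2*(x-1/2))^2) x :=
    (hasDerivAt_const x (1:ℝ)).div hden hne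
  have hars2 : HasDerivAt (fun x : ℝ => Real.arsinh (1/(2*(x - 1/2))))
      ((Real.sqrt (1 + (1/(2*(x-1/2)))^2))⁻¹ * ((0*(2*(x-1/2)) - 1*2)/(2*(x-1/2))^2)) x :=
    (Real.hasDerivAt_arsinh _).comp x hinv
  have hcube : HasDerivAt (fun x : ℝ => (x - 1/2)^3) (3*(x-1/2)^2*1) x := hw.pow 3
  have h3 := ((hcube.mul hars2).const_mul (2/3)).const_mul 1
  have htot := ((h1.add h2).add ((hcube.mul hars2).const_mul (2/3))).const_mul (Real.sqrt 2 / 2)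
  have : HasDerivAt Hfun
      (Real.sqrt 2 / 2 * ((1 * Real.sqrt (4*(x - 1/2)^2 + 1)
          + (x - 1/2) * (1 / (2 * Real.sqrt (4*(x - 1/2)^2 + 1)) * (4*(2*(x-1/2)^1*1)))) / 3
        + (Real.sqrt (1 + (2*(x-1/2))^2))⁻¹ * 2 / 12
        + 2/3 * ((3*(x-1/2)^2*1) * Real.arsinh (1/(2*(x - 1/2)))
          + (x - 1/2)^3 * ((Real.sqrt (1 + (1/(2*(x-1/2)))^2))⁻¹
              * ((0*(2*(x-1/2)) - 1*2)/(2*(x-1/2))^2))))) x := by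
    unfold Hfun
    convert htot using 2
    · rfl
    · rfl
    simp only [Pi.add_apply, Pi.mul_apply]
    ring
  convert this using 1
  -- algebra
  set s := Real.sqrt (4*(x - 1/2)^2 + 1) with hsdef
  have hspos : 0 < s := Real.sqrt_pos.2 hqpos
  have hs2 : s^2 = 4*(x - 1/2)^2 + 1 := Real.sq_sqrt hqpos.le
  have e1 : Real.sqrt (1 + (2*(x-1/2))^2) = s := by
    rw [hsdef]; congr 1; ring
  have e2 : Real.sqrt (1 + (1/(2*(x-1/2)))^2) = s / (2*(x-1/2)) := by
    have he : (1 + (1/(2*(x-1/2)))^2) = (s/(2*(x-1/2)))^2 := by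
      have hwne : (2:ℝ)*(x-1/2) ≠ 0 := by positivity
      rw [div_pow, div_pow, hs2, eq_div_iff (pow_ne_zero 2 hwne), add_mul, one_mul,
        div_mul_cancel₀ _ (pow_ne_zero 2 hwne)]
      ring
    rw [he, Real.sqrt_sq (by positivity)]
  have e3 : Real.sqrt ((x - 1/2)^2 + 1/4) = s / 2 := by
    have he : ((x - 1/2)^2 + 1/4) = (s/2)^2 := by
      rw [div_pow, hs2]; ring
    rw [he, Real.sqrt_sq (by positivity)]
  have e4 : |x - 1/2| = x - 1/2 := abs_of_pos ht
  unfold hfun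
  rw [e1, e2, e3, e4]
  set w : ℝ := x - 1/2 with hwdef
  set A : ℝ := Real.arsinh (1/(2*w)) with hAdef
  have hw0 : w ≠ 0 := ht.ne'
  have hs0 : s ≠ 0 := hspos.ne'
  field_simp
  ring_nf
  linear_combination 12 * hs2

lemma arsinh_one_eq : Real.arsinh 1 = Real.log (1 + Real.sqrt 2) := by
  rw [Real.arsinh]
  norm_num

lemma sub_int : (∫ u in (1/2:ℝ)..1, hfun u) = Hfun 1 - Hfun (1/2) :=
  intervalIntegral.integral_eq_sub_of_hasDerivAt_of_le (by norm_num) Hfun_cont Hfun_deriv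
    hfun_intervalIntegrable2

lemma Hfun_half : Hfun (1/2) = 0 := by
  unfold Hfun
  norm_num

lemma Hfun_one : Hfun 1 = Real.sqrt 2 / 2 * (Real.sqrt 2 / 6 + Real.arsinh 1 / 6) := by
  unfold Hfun
  rw [show (4*((1:ℝ) - 1/2)^2 + 1) = 2 by norm_num,
    show (2*((1:ℝ) - 1/2)) = 1 by norm_num]
  norm_num
  ring

lemma hfun_symm (x : ℝ) : hfun (1 - x) = hfun x := by
  unfold hfun
  rw [show ((1 - x) - 1/2 : ℝ) = -(x - 1/2) by ring, abs_neg, neg_sq]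

lemma sym_int : (∫ u in (0:ℝ)..(1/2), hfun u) = ∫ u in (1/2:ℝ)..1, hfun u := by
  calc (∫ u in (0:ℝ)..(1/2), hfun u) = ∫ x in ((1:ℝ)-1)..((1:ℝ)-(1/2)), hfun x := by norm_num
    _ = ∫ x in (1/2:ℝ)..1, hfun (1-x) := (intervalIntegral.integral_comp_sub_left hfun 1).symm
    _ = ∫ x in (1/2:ℝ)..1, hfun x := by simp only [hfun_symm]

lemma outer_eq : (∫ u in (0:ℝ)..1, hfun u)
    = (Real.sqrt 2 + Real.log (1 + Real.sqrt 2)) / (3 * Real.sqrt 2) := by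
  rw [← intervalIntegral.integral_add_adjacent_intervals hfun_intervalIntegrable1
    hfun_intervalIntegrable2]
  rw [sym_int, sub_int, Hfun_one, Hfun_half, ← arsinh_one_eq]
  have hs : Real.sqrt 2 ^ 2 = 2 := Real.sq_sqrt (by norm_num)
  rw [eq_div_iff (by positivity : (3:ℝ)*Real.sqrt 2 ≠ 0)]
  ring_nf
  linear_combination ((Real.sqrt 2 + Real.arsinh 1)/2) * hs


lemma uniform01_integral (g : ℝ → ℝ) : (∫ y, g y ∂uniform01) = ∫ y in (0:ℝ)..1, g y := by
  rw [uniform01, intervalIntegral.integral_of_le (by norm_num : (0:ℝ) ≤ 1),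
    ← MeasureTheory.integral_Icc_eq_integral_Ioc]

lemma F_cont : Continuous (fun p : ℝ × ℝ => Real.sqrt ((p.1 - p.2)^2 + (1 - p.1 - p.2)^2)) :=
  Real.continuous_sqrt.comp (by continuity)

lemma uprod_eq : uniform01.prod uniform01
    = (volume : Measure (ℝ × ℝ)).restrict (Set.Icc 0 1 ×ˢ Set.Icc 0 1) := by
  rw [uniform01, Measure.prod_restrict, ← Measure.volume_eq_prod]

lemma F_integrable : Integrable (fun p : ℝ × ℝ =>
    Real.sqrt ((p.1 - p.2)^2 + (1 - p.1 - p.2)^2)) (uniform01.prod uniform01) := by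
  rw [uprod_eq]
  exact (F_cont.continuousOn).integrableOn_compact (isCompact_Icc.prod isCompact_Icc)

lemma part1 : (∫ p : ℝ × ℝ, Real.sqrt ((p.1 - p.2) ^ 2 + (1 - p.1 - p.2) ^ 2)
      ∂(uniform01.prod uniform01))
    = (Real.sqrt 2 + Real.log (1 + Real.sqrt 2)) / (3 * Real.sqrt 2) := by
  have h1 : (∫ p : ℝ × ℝ, Real.sqrt ((p.1 - p.2) ^ 2 + (1 - p.1 - p.2) ^ 2)
        ∂(uniform01.prod uniform01))
      = ∫ x, (∫ y, Real.sqrt ((x - y)^2 + (1 - x - y)^2) ∂uniform01) ∂uniform01 :=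
    (MeasureTheory.integral_integral (f := fun x y => Real.sqrt ((x - y)^2 + (1 - x - y)^2)) F_integrable).symm
  rw [h1]
  have h2 : (fun x => ∫ y, Real.sqrt ((x - y)^2 + (1 - x - y)^2) ∂uniform01) = hfun := by
    funext x
    rw [uniform01_integral, inner_eq]
  rw [h2, uniform01_integral, outer_eq]

lemma dist2_eval (x : Fin 2 → ℝ) (v : ℝ) :
    dist2 x ![v, v] = Real.sqrt ((x 0 - v)^2 + (x 1 - v)^2) := by
  unfold dist2
  rw [Fin.sum_univ_two]
  simp [Matrix.cons_val_zero, Matrix.cons_val_one, Matrix.head_cons]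

lemma part2 : S 2 CMinus2 CPlus2
    = (Real.sqrt 2 + Real.log (1 + Real.sqrt 2)) / (3 * Real.sqrt 2) := by
  have hphi1 : Measurable (fun u : ℝ => ![u, 1 - u]) := by
    rw [measurable_pi_iff]
    intro i
    fin_cases i <;> simp <;> fun_prop
  have hphi2 : Measurable (fun u : ℝ => ![u, u]) := by
    rw [measurable_pi_iff]
    intro i
    fin_cases i <;> simp <;> fun_prop
  have stepA : (fun x : Fin 2 → ℝ => ∫ y, dist2 x y ∂CPlus2)
      = fun x => ∫ v, Real.sqrt ((x 0 - v)^2 + (x 1 - v)^2) ∂uniform01 := by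
    funext x
    rw [CPlus2, integral_map_of_stronglyMeasurable hphi2
      (Continuous.stronglyMeasurable (by
        unfold dist2
        exact Real.continuous_sqrt.comp (by continuity)))]
    simp only [dist2_eval]
  have hG : StronglyMeasurable
      (fun x : Fin 2 → ℝ => ∫ v, Real.sqrt ((x 0 - v)^2 + (x 1 - v)^2) ∂uniform01) := by
    apply StronglyMeasurable.integral_prod_right'
      (f := fun q : (Fin 2 → ℝ) × ℝ => Real.sqrt ((q.1 0 - q.2)^2 + (q.1 1 - q.2)^2))
    apply Continuous.stronglyMeasurable
    apply Real.continuous_sqrt.comp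
    have c0 : Continuous (fun q : (Fin 2 → ℝ) × ℝ => q.1 0) :=
      (continuous_apply 0).comp continuous_fst
    have c1 : Continuous (fun q : (Fin 2 → ℝ) × ℝ => q.1 1) :=
      (continuous_apply 1).comp continuous_fst
    exact ((c0.sub continuous_snd).pow 2).add ((c1.sub continuous_snd).pow 2)
  unfold S
  rw [stepA, CMinus2, integral_map_of_stronglyMeasurable hphi1 hG]
  have heval : (fun u : ℝ => ∫ v, Real.sqrt (((![u, 1-u] : Fin 2 → ℝ) 0 - v)^2
      + ((![u, 1-u] : Fin 2 → ℝ) 1 - v)^2) ∂uniform01) = hfun := by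
    funext u
    have : ∀ v : ℝ, Real.sqrt (((![u, 1-u] : Fin 2 → ℝ) 0 - v)^2
        + ((![u, 1-u] : Fin 2 → ℝ) 1 - v)^2) = Real.sqrt ((u - v)^2 + (1 - u - v)^2) := by
      intro v
      simp [Matrix.cons_val_zero, Matrix.cons_val_one, Matrix.head_cons]
    simp only [this]
    rw [uniform01_integral, inner_eq]
  rw [heval, uniform01_integral, outer_eq]

/-- for independent `U, V` uniform on `[0,1]`,
`E√((U-V)² + (1-U-V)²) = (√2 + log(1+√2))/(3√2)`; equivalently
`S(C⁻,C⁺) = (√2 + log(1+√2))/(3√2)`. -/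
theorem stmt7 :
    (∫ p : ℝ × ℝ, Real.sqrt ((p.1 - p.2) ^ 2 + (1 - p.1 - p.2) ^ 2)
        ∂(uniform01.prod uniform01)
      = (Real.sqrt 2 + Real.log (1 + Real.sqrt 2)) / (3 * Real.sqrt 2)) ∧
    S 2 CMinus2 CPlus2 = (Real.sqrt 2 + Real.log (1 + Real.sqrt 2)) / (3 * Real.sqrt 2) :=
  ⟨part1, part2⟩
end

section
/- Let X be a real random variable whose cumulative distribution function F is continuous, symmetric about μ (i.e., F(μ+t) + F(μ−t) = 1 for all t > 0) and unimodal with mode μ (i.e., F is convex on (−∞,μ] and concave on [μ,∞)). Then for all x, y with μ ≤ x < y, and also for all x, y with μ ≥ x > y, the random variable |X−x| is stochastically smaller than |X−y|: P(|X−x| > t) ≤ P(|X−y| > t) for every t ≥ 0. -/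
open MeasureTheory Set

/-- Auxiliary concavity fact: for `p, q ≥ m`, `p ≤ r`, `p ≤ s` and `r + s = p + q`,
a function concave on `[m, ∞)` satisfies `F p + F q ≤ F r + F s`. -/
lemma stmt13_conc_sum {F : ℝ → ℝ} {m p q r s : ℝ} (hconc : ConcaveOn ℝ (Set.Ici m) F)
    (hp : m ≤ p) (hq : m ≤ q) (hpr : p ≤ r) (hps : p ≤ s) (hsum : r + s = p + q) :
    F p + F q ≤ F r + F s := by
  have hrq : r ≤ q := by linarith
  have hsq : s ≤ q := by linarith
  rcases eq_or_lt_of_le (le_trans hpr hrq) with h | hpq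
  · have hr : r = p := le_antisymm (h ▸ hrq) hpr
    have hs : s = p := le_antisymm (h ▸ hsq) hps
    rw [hr, hs, ← h]
  · have hqp : (0:ℝ) < q - p := by linarith
    set l : ℝ := (q - r) / (q - p) with hl
    have hl0 : 0 ≤ l := div_nonneg (by linarith) (by linarith)
    have hl1 : 0 ≤ 1 - l := by
      rw [hl]; rw [sub_nonneg]
      exact div_le_one_of_le₀ (by linarith) (by linarith)
    have h1 : l • F p + (1-l) • F q ≤ F (l • p + (1-l) • q) :=
      hconc.2 hp hq hl0 hl1 (by ring)
    have h2 : (1-l) • F p + l • F q ≤ F ((1-l) • p + l • q) :=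
      hconc.2 hp hq hl1 hl0 (by ring)
    have hr : l • p + (1-l) • q = r := by
      simp only [smul_eq_mul, hl]; field_simp; ring
    have hs : (1-l) • p + l • q = s := by
      have : s = p + q - r := by linarith
      simp only [smul_eq_mul, hl, this]; field_simp; ring
    rw [hr] at h1; rw [hs] at h2
    simp only [smul_eq_mul] at h1 h2
    nlinarith [h1, h2]

/-- Core analytic inequality: if `F` is concave on `[m, ∞)` and symmetric about `m`,
then `a ↦ F (m + (a + t)) - F (m + (a - t))` is nonincreasing on `[0, ∞)`. -/
lemma stmt13_core {F : ℝ → ℝ} {m : ℝ} (hconc : ConcaveOn ℝ (Set.Ici m) F)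
    (hsym : ∀ s : ℝ, F (m + s) + F (m - s) = 1)
    {a b t : ℝ} (ha : 0 ≤ a) (hab : a ≤ b) (ht : 0 ≤ t) :
    F (m + (b + t)) - F (m + (b - t)) ≤ F (m + (a + t)) - F (m + (a - t)) := by
  have hsw : ∀ c : ℝ, F (m + (c - t)) = 1 - F (m + (t - c)) := by
    intro c
    have h := hsym (t - c)
    have : m - (t - c) = m + (c - t) := by ring
    rw [this] at h; linarith
  have key : ∀ c d : ℝ, t ≤ c → c ≤ d →
      F (m + (d + t)) - F (m + (d - t)) ≤ F (m + (c + t)) - F (m + (c - t)) := by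
    intro c d htc hcd
    have := stmt13_conc_sum hconc (p := m + (c - t)) (q := m + (d + t))
      (r := m + (c + t)) (s := m + (d - t))
      (by simp only [le_add_iff_nonneg_right]; linarith)
      (by simp only [le_add_iff_nonneg_right]; linarith)
      (by linarith) (by linarith) (by ring)
    linarith
  rcases le_or_gt t a with h1 | h1
  · exact key a b h1 hab
  · rcases le_or_gt b t with h2 | h2
    · have hb := hsw b
      have ha' := hsw a
      have := stmt13_conc_sum hconc (p := m + (t - b)) (q := m + (b + t))
        (r := m + (t - a)) (s := m + (a + t))
        (by simp only [le_add_iff_nonneg_right]; linarith)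
        (by simp only [le_add_iff_nonneg_right]; linarith)
        (by linarith) (by linarith) (by ring)
      linarith
    · have hmid : F (m + (t + t)) - F (m + (t - t)) ≤ F (m + (a + t)) - F (m + (a - t)) := by
        have ha' := hsw a
        have ht' := hsw t
        have := stmt13_conc_sum hconc (p := m + (t - t)) (q := m + (t + t))
          (r := m + (t - a)) (s := m + (a + t))
          (by simp only [le_add_iff_nonneg_right]; linarith)
          (by simp only [le_add_iff_nonneg_right]; linarith)
          (by linarith) (by linarith) (by ring)
        linarith
      have hright := key t b le_rfl (le_of_lt h2)
      linarith

/-- if `X ∼ μ` has a continuous cdf `F` that is symmetric about `m` and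
unimodal with mode `m` (convex on `(-∞,m]`, concave on `[m,∞)`), then for `m ≤ x < y`
(and for `m ≥ x > y`), `|X-x| ≤_st |X-y|`, i.e.
`P(|X-x| > t) ≤ P(|X-y| > t)` for all `t ≥ 0`. -/
theorem stmt13 (μ : Measure ℝ) [IsProbabilityMeasure μ] (m : ℝ)
    (F : ℝ → ℝ) (hFdef : ∀ t, F t = (μ (Set.Iic t)).toReal)
    (hcont : Continuous F)
    (hsym : ∀ t > 0, F (m + t) + F (m - t) = 1)
    (hconv : ConvexOn ℝ (Set.Iic m) F)
    (hconc : ConcaveOn ℝ (Set.Ici m) F)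
    (x y : ℝ) (hxy : (m ≤ x ∧ x < y) ∨ (m ≥ x ∧ x > y)) :
    ∀ t : ℝ, 0 ≤ t → μ {s | t < |s - x|} ≤ μ {s | t < |s - y|} := by
  intro t ht
  -- Since F is continuous, μ has no atoms: μ (Iio p) has the same mass as μ (Iic p).
  have hIio : ∀ p : ℝ, (μ (Set.Iio p)).toReal = F p := by
    intro p
    have hle : (μ (Set.Iio p)).toReal ≤ F p := by
      rw [hFdef]
      exact ENNReal.toReal_mono (measure_ne_top μ _) (measure_mono Set.Iio_subset_Iic_self)
    rcases eq_or_lt_of_le hle with h | h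
    · exact h
    · exfalso
      set ε := F p - (μ (Set.Iio p)).toReal with hε
      have hεpos : 0 < ε := by linarith
      obtain ⟨δ, hδpos, hδ⟩ := Metric.continuous_iff.mp hcont p ε hεpos
      have hd : dist (p - δ/2) p < δ := by
        rw [Real.dist_eq, abs_of_nonpos (by linarith : p - δ/2 - p ≤ 0)]; linarith
      have h2 := hδ _ hd
      rw [Real.dist_eq] at h2
      have h3 : F p - ε < F (p - δ/2) := by
        have := abs_lt.mp h2; linarith
      have h4 : F (p - δ/2) ≤ (μ (Set.Iio p)).toReal := by
        rw [hFdef]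
        exact ENNReal.toReal_mono (measure_ne_top μ _)
          (measure_mono (Set.Iic_subset_Iio.mpr (by linarith)))
      linarith
  -- symmetry holds for all real s (including s ≤ 0), by continuity
  have hsym' : ∀ s : ℝ, F (m + s) + F (m - s) = 1 := by
    intro s
    rcases lt_trichotomy s 0 with h | h | h
    · have := hsym (-s) (by linarith)
      rw [sub_neg_eq_add] at this
      have e : m + -s = m - s := by ring
      rw [e] at this; linarith
    · subst h
      have hlim : Filter.Tendsto (fun n : ℕ => F (m + 1/(n+1)) + F (m - 1/(n+1)))
          Filter.atTop (nhds (F (m + 0) + F (m - 0))) := by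
        apply Filter.Tendsto.add
        · exact (hcont.tendsto _).comp
            (by simpa using ((tendsto_const_nhds : Filter.Tendsto (fun _ : ℕ => m) Filter.atTop (nhds m)).add tendsto_one_div_add_atTop_nhds_zero_nat))
        · exact (hcont.tendsto _).comp
            (by simpa using ((tendsto_const_nhds : Filter.Tendsto (fun _ : ℕ => m) Filter.atTop (nhds m)).sub tendsto_one_div_add_atTop_nhds_zero_nat))
      have hconst : ∀ n : ℕ, F (m + 1/(n+1)) + F (m - 1/(n+1)) = 1 := by
        intro n; exact hsym _ (by positivity)
      have hlim' : Filter.Tendsto (fun _ : ℕ => (1:ℝ)) Filter.atTop (nhds (F (m+0) + F (m-0))) :=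
        (Filter.tendsto_congr hconst).mp hlim
      have := tendsto_nhds_unique hlim' tendsto_const_nhds
      linarith
    · exact hsym s h
  -- tail probability decomposition
  have hdecomp : ∀ z : ℝ, (μ {s | t < |s - z|}).toReal = F (z - t) + (1 - F (z + t)) := by
    intro z
    have hset : {s : ℝ | t < |s - z|} = Set.Iio (z - t) ∪ Set.Ioi (z + t) := by
      ext s
      simp only [Set.mem_setOf_eq, Set.mem_union, Set.mem_Iio, Set.mem_Ioi, lt_abs]
      constructor
      · rintro (h | h)
        · right; linarith
        · left; linarith
      · rintro (h | h)
        · right; linarith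
        · left; linarith
    have hdisj : Disjoint (Set.Iio (z - t)) (Set.Ioi (z + t)) := by
      rw [Set.disjoint_left]
      intro s hs1 hs2
      simp only [Set.mem_Iio] at hs1
      simp only [Set.mem_Ioi] at hs2
      linarith
    rw [hset, measure_union hdisj measurableSet_Ioi,
      ENNReal.toReal_add (measure_ne_top μ _) (measure_ne_top μ _), hIio]
    congr 1
    have hIoi : Set.Ioi (z + t) = (Set.Iic (z + t))ᶜ := by simp
    rw [hIoi, measure_compl measurableSet_Iic (measure_ne_top μ _), measure_univ,
      ENNReal.toReal_sub_of_le prob_le_one ENNReal.one_ne_top, ENNReal.toReal_one, hFdef]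
  -- express the tail probability through the deviation from the mode
  have hformula : ∀ z : ℝ,
      (μ {s | t < |s - z|}).toReal = F (m + (|z - m| - t)) + (1 - F (m + (|z - m| + t))) := by
    intro z
    rcases le_total m z with hz | hz
    · have e : |z - m| = z - m := abs_of_nonneg (by linarith)
      rw [hdecomp z, e]
      have e1 : z - t = m + (z - m - t) := by ring
      have e2 : z + t = m + (z - m + t) := by ring
      rw [e1, e2]
    · have e : |z - m| = m - z := by
        rw [abs_of_nonpos (by linarith : z - m ≤ 0)]; ring
      rw [hdecomp z, e]
      have s1 := hsym' (m - z + t)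
      have s2 := hsym' (m - z - t)
      have e1 : m - (m - z + t) = z - t := by ring
      have e2 : m - (m - z - t) = z + t := by ring
      rw [e1] at s1; rw [e2] at s2
      linarith
  -- |x - m| ≤ |y - m| in both branches
  have hab : |x - m| ≤ |y - m| ∧ 0 ≤ |x - m| := by
    refine ⟨?_, abs_nonneg _⟩
    rcases hxy with ⟨h1, h2⟩ | ⟨h1, h2⟩
    · rw [abs_of_nonneg (by linarith), abs_of_nonneg (by linarith)]; linarith
    · rw [abs_of_nonpos (by linarith), abs_of_nonpos (by linarith)]; linarith
  -- conclude
  rw [← ENNReal.toReal_le_toReal (measure_ne_top μ _) (measure_ne_top μ _),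
    hformula x, hformula y]
  have := stmt13_core hconc hsym' hab.2 hab.1 ht (t := t)
  linarith
end

section
/- For every β ∈ (0,2), every copula C on [0,1]^d and every y ∈ [0,1]^d, S_β(C,y) ≥ S_β(C⁺, (1/2,…,1/2)) = d^{β/2} · (1/2)^β / (β+1), where C⁺ is the law of (U,…,U) for U uniform on [0,1]. -/
open MeasureTheory Set

/-- `S_β(C,y) = ∫ ‖x-y‖₂^β C(dx)` for an observation `y`. -/
noncomputable def SbY (d : ℕ) (β : ℝ) (C : Measure (Fin d → ℝ)) (y : Fin d → ℝ) : ℝ :=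
  ∫ x, dist2 x y ^ β ∂C

/-- The upper Fréchet (comonotone) copula `C⁺`: the law of `(U,…,U)` for `U` uniform on `[0,1]`. -/
noncomputable def CPlus (d : ℕ) : Measure (Fin d → ℝ) :=
  Measure.map (fun u : ℝ => fun _ : Fin d => u) uniform01

lemma uniform01_prob : IsProbabilityMeasure uniform01 := by
  constructor
  simp [uniform01, Real.volume_Icc]

lemma cont_abs_rpow (β c : ℝ) (hβ : 0 ≤ β) : Continuous fun u : ℝ => |u - c| ^ β :=
  ((continuous_id.sub continuous_const).abs).rpow_const (fun _ => Or.inr hβ)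

lemma integral_abs_rpow (β : ℝ) (hβ : 0 < β) (c : ℝ) (hc : c ∈ Icc (0:ℝ) 1) :
    ∫ u, |u - c| ^ β ∂uniform01 = (c ^ (β+1) + (1-c) ^ (β+1)) / (β+1) := by
  obtain ⟨hc0, hc1⟩ := hc
  have hcont := cont_abs_rpow β c hβ.le
  have hβ1 : (0:ℝ) < β + 1 := by linarith
  have hmain : ∫ u, |u - c| ^ β ∂uniform01 = ∫ u in (0:ℝ)..1, |u - c| ^ β := by
    rw [uniform01, intervalIntegral.integral_of_le one_pos.le,
      ← MeasureTheory.integral_Icc_eq_integral_Ioc]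
  rw [hmain, ← intervalIntegral.integral_add_adjacent_intervals
    (a := (0:ℝ)) (b := c) (c := 1)
    (hcont.intervalIntegrable 0 c) (hcont.intervalIntegrable c 1)]
  have h1 : ∫ u in (0:ℝ)..c, |u - c| ^ β = c ^ (β+1) / (β+1) := by
    have e1 : ∫ u in (0:ℝ)..c, |u - c| ^ β = ∫ u in (0:ℝ)..c, (c - u) ^ β := by
      apply intervalIntegral.integral_congr
      intro u hu
      rw [Set.uIcc_of_le hc0] at hu
      have habs : |u - c| = c - u := by
        rw [abs_of_nonpos (by linarith [hu.2])]; ring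
      show |u - c| ^ β = (c - u) ^ β
      rw [habs]
    rw [e1, intervalIntegral.integral_comp_sub_left (fun u => u ^ β) c, sub_self,
      sub_zero, integral_rpow (Or.inl (by linarith)), Real.zero_rpow (by positivity),
      sub_zero]
  have h2 : ∫ u in c..(1:ℝ), |u - c| ^ β = (1-c) ^ (β+1) / (β+1) := by
    have e1 : ∫ u in c..(1:ℝ), |u - c| ^ β = ∫ u in c..(1:ℝ), (u - c) ^ β := by
      apply intervalIntegral.integral_congr
      intro u hu
      rw [Set.uIcc_of_le hc1] at hu
      show |u - c| ^ β = (u - c) ^ β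
      rw [abs_of_nonneg (by linarith [hu.1])]
    rw [e1, intervalIntegral.integral_comp_sub_right (fun u => u ^ β) c, sub_self,
      integral_rpow (Or.inl (by linarith)), Real.zero_rpow (by positivity), sub_zero]
  rw [h1, h2]
  ring

lemma half_pow_le (β : ℝ) (hβ : 0 < β) (c : ℝ) (hc : c ∈ Icc (0:ℝ) 1) :
    (1/2 : ℝ) ^ β ≤ c ^ (β+1) + (1-c) ^ (β+1) := by
  obtain ⟨hc0, hc1⟩ := hc
  have hconv : ConvexOn ℝ (Ici 0) (fun x : ℝ => x ^ (β+1)) := convexOn_rpow (by linarith)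
  have h := hconv.2 (show c ∈ Ici (0:ℝ) from hc0) (show 1 - c ∈ Ici (0:ℝ) by
      simp [mem_Ici]; linarith)
    (by norm_num : (0:ℝ) ≤ 1/2) (by norm_num : (0:ℝ) ≤ 1/2) (by norm_num)
  simp only [smul_eq_mul] at h
  have e : (1/2 : ℝ) * c + 1/2 * (1 - c) = 1/2 := by ring
  rw [e] at h
  have e2 : (1/2 : ℝ) ^ (β+1) = (1/2 : ℝ) ^ β * (1/2) := by
    rw [Real.rpow_add (by norm_num : (0:ℝ) < 1/2), Real.rpow_one]
  rw [e2] at h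
  nlinarith [h]

lemma dist2_const (d : ℕ) (u : ℝ) :
    dist2 (fun _ : Fin d => u) (fun _ => 1/2) = Real.sqrt d * |u - 1/2| := by
  unfold dist2
  rw [Finset.sum_const, Finset.card_univ, Fintype.card_fin, nsmul_eq_mul,
    Real.sqrt_mul (Nat.cast_nonneg d), Real.sqrt_sq_eq_abs]

lemma sqrt_rpow_eq (d : ℕ) (β : ℝ) : (Real.sqrt d) ^ β = (d:ℝ) ^ (β/2) := by
  rw [Real.sqrt_eq_rpow, ← Real.rpow_mul (Nat.cast_nonneg d)]
  congr 1; ring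

lemma cplus_val (d : ℕ) (β : ℝ) (hβ0 : 0 < β) :
    SbY d β (CPlus d) (fun _ => 1 / 2) = (d : ℝ) ^ (β / 2) * ((1 / 2 : ℝ) ^ β / (β + 1)) := by
  have hmeas : Measurable (fun u : ℝ => fun _ : Fin d => u) :=
    measurable_pi_lambda _ (fun _ => measurable_id)
  have hcontd : Continuous (fun x : Fin d → ℝ => dist2 x (fun _ => 1/2) ^ β) := by
    apply Continuous.rpow_const
    · exact Real.continuous_sqrt.comp (continuous_finset_sum _ fun i _ =>
        ((continuous_apply i).sub continuous_const).pow 2)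
    · exact fun _ => Or.inr hβ0.le
  rw [SbY, CPlus, integral_map hmeas.aemeasurable hcontd.aestronglyMeasurable]
  have e : ∀ u : ℝ, dist2 (fun _ : Fin d => u) (fun _ => 1/2) ^ β
      = (d:ℝ) ^ (β/2) * |u - 1/2| ^ β := by
    intro u
    rw [dist2_const, Real.mul_rpow (Real.sqrt_nonneg _) (abs_nonneg _), sqrt_rpow_eq]
  simp only [e]
  rw [integral_const_mul, integral_abs_rpow β hβ0 (1/2) (by norm_num)]
  have : ((1:ℝ)/2) ^ (β+1) + (1 - 1/2 : ℝ) ^ (β+1) = (1/2 : ℝ) ^ β := by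
    have : ((1:ℝ)/2) ^ (β+1) = (1/2 : ℝ) ^ β * (1/2) := by
      rw [Real.rpow_add (by norm_num : (0:ℝ) < 1/2), Real.rpow_one]
    rw [show (1 - 1/2 : ℝ) = 1/2 by norm_num, this]; ring
  rw [this]

lemma key_pointwise (d : ℕ) (β : ℝ) (hβ0 : 0 < β) (hβ2 : β < 2) (x y : Fin d → ℝ) :
    (d:ℝ) ^ (β/2 - 1) * ∑ i, |x i - y i| ^ β ≤ dist2 x y ^ β := by
  rcases Nat.eq_zero_or_pos d with hd | hd
  · subst hd
    simp [dist2, Real.zero_rpow hβ0.ne']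
  have hD : (0:ℝ) < d := by exact_mod_cast hd
  set S : ℝ := ∑ i, (x i - y i) ^ 2 with hS
  have hSnn : 0 ≤ S := Finset.sum_nonneg fun i _ => sq_nonneg _
  have hdist : dist2 x y ^ β = S ^ (β/2) := by
    rw [dist2, Real.sqrt_eq_rpow, ← Real.rpow_mul hSnn]
    congr 1; ring
  rw [hdist]
  have hp : (1:ℝ) ≤ 2/β := by
    rw [le_div_iff₀ hβ0]; linarith
  have hjen := Real.arith_mean_le_rpow_mean Finset.univ (fun _ => (d:ℝ)⁻¹)
    (fun i => |x i - y i| ^ β) (fun i _ => by positivity)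
    (by simp [Finset.sum_const, Finset.card_univ]; field_simp)
    (fun i _ => by positivity) hp
  have hz : ∀ i : Fin d, (|x i - y i| ^ β) ^ (2/β) = (x i - y i) ^ 2 := by
    intro i
    rw [← Real.rpow_mul (abs_nonneg _), mul_div_cancel₀ 2 hβ0.ne',
      show ((2:ℝ) = ((2:ℕ):ℝ)) by norm_num, Real.rpow_natCast, sq_abs]
  simp only [hz] at hjen
  rw [← Finset.mul_sum, ← Finset.mul_sum, one_div_div, ← hS] at hjen
  rw [Real.mul_rpow (by positivity) hSnn, Real.inv_rpow hD.le] at hjen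
  set T : ℝ := ∑ i, |x i - y i| ^ β with hT
  have hpos : (0:ℝ) < (d:ℝ) ^ (β/2) := Real.rpow_pos_of_pos hD _
  calc (d:ℝ) ^ (β/2 - 1) * T = (d:ℝ) ^ (β/2) * ((d:ℝ)⁻¹ * T) := by
        rw [Real.rpow_sub hD, Real.rpow_one]; ring
    _ ≤ (d:ℝ) ^ (β/2) * (((d:ℝ) ^ (β/2))⁻¹ * S ^ (β/2)) :=
        mul_le_mul_of_nonneg_left hjen hpos.le
    _ = S ^ (β/2) := by field_simp

/-- for every copula `C` and `y ∈ [0,1]^d`,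
`S_β(C,y) ≥ S_β(C⁺,(1/2,…,1/2)) = d^{β/2}·(1/2)^β/(β+1)`. -/
theorem stmt15 (d : ℕ) (β : ℝ) (hβ0 : 0 < β) (hβ2 : β < 2)
    (C : Measure (Fin d → ℝ)) (hC : IsCopula d C)
    (y : Fin d → ℝ) (hy : ∀ i, y i ∈ Set.Icc (0 : ℝ) 1) :
    SbY d β C y ≥ SbY d β (CPlus d) (fun _ => 1 / 2) ∧
      SbY d β (CPlus d) (fun _ => 1 / 2) = (d : ℝ) ^ (β / 2) * ((1 / 2 : ℝ) ^ β / (β + 1)) := by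
  haveI := hC.1
  refine ⟨?_, cplus_val d β hβ0⟩
  rw [cplus_val d β hβ0]
  rcases Nat.eq_zero_or_pos d with hd | hd
  · subst hd
    simp only [Nat.cast_zero, Real.zero_rpow (by positivity : β/2 ≠ 0), zero_mul]
    exact integral_nonneg fun x => Real.rpow_nonneg (Real.sqrt_nonneg _) _
  have hD : (0:ℝ) < d := by exact_mod_cast hd
  have hβ1 : (0:ℝ) < β + 1 := by linarith
  -- a.e. the coordinates are in [0,1]
  have hae : ∀ᵐ x ∂C, ∀ i, x i ∈ Icc (0:ℝ) 1 := by
    rw [ae_all_iff]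
    intro i
    have h0 : C ((fun x : Fin d → ℝ => x i) ⁻¹' (Icc (0:ℝ) 1)ᶜ) = 0 := by
      rw [← Measure.map_apply (measurable_pi_apply i) measurableSet_Icc.compl, hC.2 i,
        uniform01, Measure.restrict_apply measurableSet_Icc.compl]
      simp
    exact ae_iff.2 h0
  -- continuity
  have hcontf : Continuous (fun x : Fin d → ℝ => dist2 x y ^ β) := by
    apply Continuous.rpow_const
    · exact Real.continuous_sqrt.comp (continuous_finset_sum _ fun i _ =>
        ((continuous_apply i).sub continuous_const).pow 2)
    · exact fun _ => Or.inr hβ0.le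
  have hconti : ∀ i : Fin d, Continuous (fun x : Fin d → ℝ => |x i - y i| ^ β) := fun i =>
    (((continuous_apply i).sub continuous_const).abs).rpow_const (fun _ => Or.inr hβ0.le)
  -- integrability
  have hIf : Integrable (fun x => dist2 x y ^ β) C := by
    refine ⟨hcontf.aestronglyMeasurable, HasFiniteIntegral.of_bounded
      (C := (Real.sqrt d) ^ β) ?_⟩
    filter_upwards [hae] with x hx
    have hnn : (0:ℝ) ≤ dist2 x y ^ β := Real.rpow_nonneg (Real.sqrt_nonneg _) _
    rw [Real.norm_eq_abs, abs_of_nonneg hnn]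
    apply Real.rpow_le_rpow (Real.sqrt_nonneg _) _ hβ0.le
    show Real.sqrt (∑ i, (x i - y i) ^ 2) ≤ Real.sqrt d
    apply Real.sqrt_le_sqrt
    calc ∑ i, (x i - y i) ^ 2 ≤ ∑ _i : Fin d, (1:ℝ) := by
          refine Finset.sum_le_sum fun i _ => ?_
          have h1 := hx i; have h2 := hy i
          nlinarith [h1.1, h1.2, h2.1, h2.2]
      _ = d := by simp
  have hIg : ∀ i : Fin d, Integrable (fun x => |x i - y i| ^ β) C := by
    intro i
    refine ⟨(hconti i).aestronglyMeasurable, HasFiniteIntegral.of_bounded (C := 1) ?_⟩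
    filter_upwards [hae] with x hx
    rw [Real.norm_eq_abs, abs_of_nonneg (by positivity)]
    calc |x i - y i| ^ β ≤ 1 ^ β := by
          apply Real.rpow_le_rpow (abs_nonneg _) _ hβ0.le
          have h1 := hx i; have h2 := hy i
          rw [abs_le]
          constructor
          · linarith [h1.1, h2.2]
          · linarith [h1.2, h2.1]
      _ = 1 := Real.one_rpow β
  -- marginal integrals
  have hmarg : ∀ i : Fin d, ∫ x, |x i - y i| ^ β ∂C
      = (y i ^ (β+1) + (1 - y i) ^ (β+1)) / (β+1) := by
    intro i
    have he : ∫ x, |x i - y i| ^ β ∂C = ∫ u, |u - y i| ^ β ∂uniform01 := by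
      rw [← hC.2 i, integral_map (measurable_pi_apply i).aemeasurable
        (cont_abs_rpow β (y i) hβ0.le).aestronglyMeasurable]
    rw [he, integral_abs_rpow β hβ0 (y i) (hy i)]
  -- step 1 : pointwise bound integrated
  have step1 : (d:ℝ) ^ (β/2 - 1) * ∑ i, ∫ x, |x i - y i| ^ β ∂C ≤ SbY d β C y := by
    rw [SbY, ← integral_finset_sum _ (fun i _ => hIg i), ← integral_const_mul]
    exact integral_mono_of_nonneg (ae_of_all _ fun x => by positivity) hIf
      (ae_of_all _ fun x => key_pointwise d β hβ0 hβ2 x y)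
  -- step 2 : lower bound on the sum
  have step2 : (d:ℝ) * ((1/2:ℝ) ^ β / (β+1)) ≤ ∑ i, ∫ x, |x i - y i| ^ β ∂C := by
    calc (d:ℝ) * ((1/2:ℝ) ^ β / (β+1)) = ∑ _i : Fin d, (1/2:ℝ) ^ β / (β+1) := by
          simp [Finset.sum_const, Finset.card_univ, mul_comm]
      _ ≤ ∑ i, ∫ x, |x i - y i| ^ β ∂C := by
          refine Finset.sum_le_sum fun i _ => ?_
          rw [hmarg i]
          exact (div_le_div_iff_of_pos_right hβ1).2 (half_pow_le β hβ0 (y i) (hy i))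
  have halg : (d:ℝ) ^ (β/2 - 1) * ((d:ℝ) * ((1/2:ℝ) ^ β / (β+1)))
      = (d:ℝ) ^ (β/2) * ((1/2:ℝ) ^ β / (β+1)) := by
    rw [show (β/2 - 1 : ℝ) = β/2 + (-1) by ring, Real.rpow_add hD, Real.rpow_neg_one]
    field_simp
  calc (d:ℝ) ^ (β/2) * ((1/2:ℝ) ^ β / (β+1))
      = (d:ℝ) ^ (β/2 - 1) * ((d:ℝ) * ((1/2:ℝ) ^ β / (β+1))) := halg.symm
    _ ≤ (d:ℝ) ^ (β/2 - 1) * ∑ i, ∫ x, |x i - y i| ^ β ∂C :=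
        mul_le_mul_of_nonneg_left step2 (Real.rpow_nonneg hD.le _)
    _ ≤ SbY d β C y := step1
end
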